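/- arXiv:1304.3233 — 11 statements merged into one kernel-verified Lean document; each statement's English description precedes it below -/
import Mathlib

section
/- For every integer r ≥ 1, the largest size of a 1-non-blocking subset of F_2^r is 2. That is, β_r(1) = 2. -/
/-- A subset `C` of `F_2^r` is `d`-complete if through every point `v` there is a
`d`-flat contained in `C ∪ {v}`; i.e. there is a `d`-dimensional subspace `L`
with `v + (L \ {0}) ⊆ C`. -/
def KakeyaComplete (r d : ℕ) (C : Set (Fin r → ZMod 2)) : Prop :=
  ∀ v : Fin r → ZMod 2, ∃ L : Submodule (ZMod 2) (Fin r → ZMod 2),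
    Module.finrank (ZMod 2) L = d ∧ ∀ x ∈ L, x ≠ 0 → v + x ∈ C

/-- `gamma r d` is the smallest size of a `d`-complete subset of `F_2^r`. -/
noncomputable def gamma (r d : ℕ) : ℕ :=
  sInf {n | ∃ C : Finset (Fin r → ZMod 2), C.card = n ∧ KakeyaComplete r d ↑C}

/-- A subset `B` of `F_2^r` is `d`-non-blocking if for every `v` there is a
subspace `L` of dimension `r - d` (codimension `d`) with `(v + (L \ {0})) ∩ B = ∅`. -/
def KakeyaNonBlocking (r d : ℕ) (B : Set (Fin r → ZMod 2)) : Prop :=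
  ∀ v : Fin r → ZMod 2, ∃ L : Submodule (ZMod 2) (Fin r → ZMod 2),
    Module.finrank (ZMod 2) L = r - d ∧ ∀ x ∈ L, x ≠ 0 → v + x ∉ B

/-- `beta r d` is the largest size of a `d`-non-blocking subset of `F_2^r`. -/
noncomputable def beta (r d : ℕ) : ℕ :=
  sSup {n | ∃ B : Finset (Fin r → ZMod 2), B.card = n ∧ KakeyaNonBlocking r d ↑B}

lemma kakeya_addSelf {r : ℕ} (x : Fin r → ZMod 2) : x + x = 0 := by
  funext i
  have h : ∀ a : ZMod 2, a + a = 0 := by decide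
  exact h (x i)

lemma kakeya_eq_of_add_eq_zero {r : ℕ} {x y : Fin r → ZMod 2} (h : x + y = 0) : x = y := by
  rw [← add_zero x, ← kakeya_addSelf y, ← add_assoc, h, zero_add]

/-- A common evaluation functional taking value 1 on two given nonzero vectors. -/
lemma kakeya_exists_phi {r : ℕ} (u₁ u₂ : Fin r → ZMod 2) (h1 : u₁ ≠ 0) (h2 : u₂ ≠ 0) :
    ∃ φ : (Fin r → ZMod 2) →ₗ[ZMod 2] ZMod 2, φ u₁ = 1 ∧ φ u₂ = 1 := by
  have hc : ∀ a : ZMod 2, a = 0 ∨ a = 1 := by decide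
  obtain ⟨i₁, hi₁⟩ : ∃ i, u₁ i = 1 := by
    by_contra h
    push_neg at h
    exact h1 (funext fun i => (hc (u₁ i)).resolve_right (h i))
  obtain ⟨i₂, hi₂⟩ : ∃ i, u₂ i = 1 := by
    by_contra h
    push_neg at h
    exact h2 (funext fun i => (hc (u₂ i)).resolve_right (h i))
  rcases hc (u₂ i₁) with h21 | h21
  · rcases hc (u₁ i₂) with h12 | h12
    · refine ⟨LinearMap.proj (R := ZMod 2) (φ := fun _ : Fin r => ZMod 2) i₁ +
        LinearMap.proj (R := ZMod 2) (φ := fun _ : Fin r => ZMod 2) i₂, ?_, ?_⟩ <;>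
        simp [hi₁, hi₂, h21, h12]
    · exact ⟨LinearMap.proj (R := ZMod 2) (φ := fun _ : Fin r => ZMod 2) i₂, h12, hi₂⟩
  · exact ⟨LinearMap.proj (R := ZMod 2) (φ := fun _ : Fin r => ZMod 2) i₁, hi₁, h21⟩

lemma kakeya_finrank_ker {r : ℕ} (hr : 1 ≤ r) (φ : (Fin r → ZMod 2) →ₗ[ZMod 2] ZMod 2)
    {u : Fin r → ZMod 2} (hu : φ u = 1) :
    Module.finrank (ZMod 2) (LinearMap.ker φ) = r - 1 := by
  have hsur : Function.Surjective φ := fun c => ⟨c • u, by simp [hu]⟩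
  have h1 := LinearMap.finrank_range_add_finrank_ker φ
  rw [LinearMap.range_eq_top.mpr hsur, finrank_top] at h1
  have h2 : Module.finrank (ZMod 2) (ZMod 2) = 1 := Module.finrank_self _
  have h3 : Module.finrank (ZMod 2) (Fin r → ZMod 2) = r := by
    simp [Module.finrank_pi]
  omega

/-- In a codimension-1 subspace situation, two vectors outside sum to a vector inside. -/
lemma kakeya_sum_mem {r : ℕ} (hr : 1 ≤ r) (L : Submodule (ZMod 2) (Fin r → ZMod 2))
    (hL : Module.finrank (ZMod 2) L = r - 1) {u₁ u₂ : Fin r → ZMod 2}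
    (h1 : u₁ ∉ L) (h2 : u₂ ∉ L) : u₁ + u₂ ∈ L := by
  have hc : ∀ a : ZMod 2, a = 0 ∨ a = 1 := by decide
  set M := L ⊔ Submodule.span (ZMod 2) {u₁} with hM
  have hu1M : u₁ ∈ M := Submodule.mem_sup_right (Submodule.mem_span_singleton_self u₁)
  have hlt : L < M := lt_of_le_of_ne le_sup_left (fun h => h1 (h ▸ hu1M))
  have hV : Module.finrank (ZMod 2) (Fin r → ZMod 2) = r := by
    simp [Module.finrank_pi]
  have hfl : Module.finrank (ZMod 2) M = r := by
    have hlt' := Submodule.finrank_lt_finrank_of_lt hlt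
    have hle := Submodule.finrank_le M
    omega
  have hMtop : M = ⊤ := Submodule.eq_top_of_finrank_eq (by rw [hfl, hV])
  have hu2M : u₂ ∈ M := hMtop ▸ Submodule.mem_top
  obtain ⟨l, hl, m, hm, hsum⟩ := Submodule.mem_sup.mp hu2M
  obtain ⟨c, hcu⟩ := Submodule.mem_span_singleton.mp hm
  rcases hc c with h0 | h1'
  · rw [h0, zero_smul] at hcu
    rw [← hcu, add_zero] at hsum
    exact absurd (hsum ▸ hl) h2
  · rw [h1', one_smul] at hcu
    have : u₁ + u₂ = l := by
      rw [← hsum, ← hcu]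
      rw [← add_assoc, add_comm u₁ l, add_assoc, kakeya_addSelf, add_zero]
    exact this ▸ hl

theorem beta_one (r : ℕ) (hr : 1 ≤ r) : beta r 1 = 2 := by
  set S := {n | ∃ B : Finset (Fin r → ZMod 2), B.card = n ∧ KakeyaNonBlocking r 1 ↑B} with hS
  -- the all-ones vector
  set b : Fin r → ZMod 2 := fun _ => 1 with hb
  have hbne : b ≠ 0 := by
    intro h
    exact one_ne_zero (congrFun h ⟨0, hr⟩)
  -- membership: {0, b} is 1-non-blocking
  have h2mem : 2 ∈ S := by
    refine ⟨{0, b}, ?_, ?_⟩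
    · rw [Finset.card_insert_of_notMem (by simpa using hbne.symm), Finset.card_singleton]
    · intro v
      set w₁ : Fin r → ZMod 2 := if v = 0 then b else v with hw₁
      set w₂ : Fin r → ZMod 2 := if v + b = 0 then b else v + b with hw₂
      have hw₁ne : w₁ ≠ 0 := by
        rw [hw₁]; split <;> [exact hbne; assumption]
      have hw₂ne : w₂ ≠ 0 := by
        rw [hw₂]; split <;> [exact hbne; assumption]
      obtain ⟨φ, hφ₁, hφ₂⟩ := kakeya_exists_phi w₁ w₂ hw₁ne hw₂ne
      refine ⟨LinearMap.ker φ, kakeya_finrank_ker hr φ hφ₁, ?_⟩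
      intro x hx hxne hmem
      simp only [Finset.coe_insert, Finset.coe_singleton, Set.mem_insert_iff,
        Set.mem_singleton_iff] at hmem
      have hxker : φ x = 0 := hx
      rcases hmem with h0 | hbb
      · -- v + x = 0, so x = v, v ≠ 0
        have hxv : v = x := kakeya_eq_of_add_eq_zero h0
        have hvne : v ≠ 0 := by rw [hxv]; exact hxne
        have : w₁ = v := by rw [hw₁, if_neg hvne]
        rw [← hxv, ← this] at hxker
        rw [hφ₁] at hxker
        exact one_ne_zero hxker
      · -- v + x = b, so x = v + b
        have hx' : (v + b) + x = 0 := by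
          rw [add_comm v b, add_assoc, hbb, kakeya_addSelf]
        have hxv : v + b = x := kakeya_eq_of_add_eq_zero hx'
        have hvbne : v + b ≠ 0 := by rw [hxv]; exact hxne
        have : w₂ = v + b := by rw [hw₂, if_neg hvbne]
        rw [← hxv, ← this] at hxker
        rw [hφ₂] at hxker
        exact one_ne_zero hxker
  -- upper bound: every element of S is ≤ 2
  have hub : ∀ n ∈ S, n ≤ 2 := by
    rintro n ⟨B, hcard, hnb⟩
    by_contra hgt
    push_neg at hgt
    have h3 : 2 < B.card := by omega
    obtain ⟨p, q, s, hp, hq, hs, hpq, hps, hqs⟩ := Finset.two_lt_card_iff.mp h3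
    obtain ⟨L, hL, hprop⟩ := hnb (p + q + s)
    set u₁ := q + s with hu₁
    set u₂ := p + s with hu₂
    have hu₁ne : u₁ ≠ 0 := fun h => hqs (kakeya_eq_of_add_eq_zero h)
    have hu₂ne : u₂ ≠ 0 := fun h => hps (kakeya_eq_of_add_eq_zero h)
    have hu₃ne : p + q ≠ 0 := fun h => hpq (kakeya_eq_of_add_eq_zero h)
    have hv₁ : (p + q + s) + u₁ = p := by
      have : (p + q + s) + u₁ = p + ((q + q) + (s + s)) := by rw [hu₁]; ring
      rw [this, kakeya_addSelf, kakeya_addSelf, add_zero, add_zero]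
    have hv₂ : (p + q + s) + u₂ = q := by
      have : (p + q + s) + u₂ = q + ((p + p) + (s + s)) := by rw [hu₂]; ring
      rw [this, kakeya_addSelf, kakeya_addSelf, add_zero, add_zero]
    have hv₃ : (p + q + s) + (u₁ + u₂) = s := by
      have : (p + q + s) + (u₁ + u₂) = s + ((p + p) + ((q + q) + (s + s))) := by
        rw [hu₁, hu₂]; ring
      rw [this, kakeya_addSelf, kakeya_addSelf, kakeya_addSelf]
      simp
    have hu₁L : u₁ ∉ L := fun h => hprop u₁ h hu₁ne (by rw [hv₁]; exact hp)
    have hu₂L : u₂ ∉ L := fun h => hprop u₂ h hu₂ne (by rw [hv₂]; exact hq)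
    have hu₃L : u₁ + u₂ ∈ L := kakeya_sum_mem hr L hL hu₁L hu₂L
    have hu₁₂ne : u₁ + u₂ ≠ 0 := by
      intro h
      have heq : q + s = p + s := by
        have h' := kakeya_eq_of_add_eq_zero h
        rwa [hu₁, hu₂] at h'
      exact hpq (by
        calc p = p + s + s := by rw [add_assoc, kakeya_addSelf, add_zero]
          _ = q + s + s := by rw [← heq]
          _ = q := by rw [add_assoc, kakeya_addSelf, add_zero])
    exact hprop (u₁ + u₂) hu₃L hu₁₂ne (by rw [hv₃]; exact hs)
  exact le_antisymm (csSup_le ⟨2, h2mem⟩ hub) (le_csSup ⟨2, hub⟩ h2mem)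
end

section
/- For any integers r₁, r₂ ≥ d ≥ 0, γ_{r₁+r₂}(d) ≤ γ_{r₁}(d) · γ_{r₂}(d); i.e., the smallest size of a d-complete set is sub-multiplicative in the dimension. -/
lemma exists_dim_subspace {r d : ℕ} (h : d ≤ r) :
    ∃ L : Submodule (ZMod 2) (Fin r → ZMod 2), Module.finrank (ZMod 2) L = d := by
  have hd : d ≤ Module.finrank (ZMod 2) (Fin r → ZMod 2) := by
    rw [Module.finrank_fin_fun]; exact h
  obtain ⟨s, hs, hli⟩ := exists_finset_linearIndependent_of_le_finrank hd
  exact ⟨Submodule.span (ZMod 2) ↑s, by rw [finrank_span_finset_eq_card hli, hs]⟩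

lemma kakeyaComplete_univ {r d : ℕ} (h : d ≤ r) :
    KakeyaComplete r d ↑(Finset.univ : Finset (Fin r → ZMod 2)) := by
  intro v
  obtain ⟨L, hL⟩ := exists_dim_subspace h
  exact ⟨L, hL, fun x _ _ => by simp⟩

lemma gamma_spec {r d : ℕ} (h : d ≤ r) :
    ∃ C : Finset (Fin r → ZMod 2), C.card = gamma r d ∧ KakeyaComplete r d ↑C := by
  have hne : {n | ∃ C : Finset (Fin r → ZMod 2), C.card = n ∧ KakeyaComplete r d ↑C}.Nonempty :=
    ⟨_, Finset.univ, rfl, kakeyaComplete_univ h⟩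
  exact Nat.sInf_mem hne

theorem gamma_submultiplicative (r₁ r₂ d : ℕ) (h₁ : d ≤ r₁) (h₂ : d ≤ r₂) :
    gamma (r₁ + r₂) d ≤ gamma r₁ d * gamma r₂ d := by
  obtain ⟨C₁, hc₁, hK₁⟩ := gamma_spec h₁
  obtain ⟨C₂, hc₂, hK₂⟩ := gamma_spec h₂
  let M₁ := Fin r₁ → ZMod 2
  let M₂ := Fin r₂ → ZMod 2
  let E : (Fin (r₁ + r₂) → ZMod 2) ≃ₗ[ZMod 2] M₁ × M₂ :=
    (LinearEquiv.funCongrLeft (ZMod 2) (ZMod 2) finSumFinEquiv) ≪≫ₗ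
      LinearEquiv.sumArrowLequivProdArrow _ _ _ _
  let C : Finset (Fin (r₁ + r₂) → ZMod 2) :=
    (C₁ ×ˢ C₂).image (fun p => E.symm p)
  have hcard : C.card ≤ gamma r₁ d * gamma r₂ d := by
    calc C.card ≤ (C₁ ×ˢ C₂).card := Finset.card_image_le
    _ = gamma r₁ d * gamma r₂ d := by rw [Finset.card_product, hc₁, hc₂]
  refine le_trans (Nat.sInf_le ⟨C, rfl, ?_⟩) hcard
  intro v
  obtain ⟨L₁, hL₁, hC₁⟩ := hK₁ (E v).1
  obtain ⟨L₂, hL₂, hC₂⟩ := hK₂ (E v).2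
  let e : L₁ ≃ₗ[ZMod 2] L₂ := LinearEquiv.ofFinrankEq _ _ (by rw [hL₁, hL₂])
  let f : L₁ →ₗ[ZMod 2] M₁ × M₂ := L₁.subtype.prod (L₂.subtype ∘ₗ (e : L₁ →ₗ[ZMod 2] L₂))
  have hfinj : Function.Injective f := by
    intro a b hab
    exact Subtype.ext (congrArg Prod.fst hab)
  refine ⟨(LinearMap.range f).map E.symm.toLinearMap, ?_, ?_⟩
  · rw [LinearEquiv.finrank_map_eq, LinearMap.finrank_range_of_inj hfinj, hL₁]
  · rintro x hx hx0
    obtain ⟨y, hy, rfl⟩ := hx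
    obtain ⟨z, rfl⟩ := hy
    have hz : z ≠ 0 := by
      rintro rfl
      simp [f] at hx0
    have h1 : (z : M₁) ≠ 0 := by simpa using hz
    have h2 : ((e z : L₂) : M₂) ≠ 0 := by
      simpa using e.map_ne_zero_iff.mpr hz
    refine Finset.mem_image.mpr
      ⟨((E v).1 + (z : M₁), (E v).2 + ((e z : L₂) : M₂)),
        Finset.mem_product.mpr ⟨hC₁ _ z.2 h1, hC₂ _ (e z).2 h2⟩, ?_⟩
    have h3 : ((E v).1 + (z : M₁), (E v).2 + ((e z : L₂) : M₂)) = E v + f z := by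
      simp [f, Prod.ext_iff, LinearMap.prod_apply]
    rw [h3, map_add, LinearEquiv.symm_apply_apply]; rfl
end

section
/- If C₁ is a d-complete subset of a vector space V₁ over F_2 and C₂ is a d-complete subset of V₂, then the sumset C₁ + C₂ (inside V₁ ⊕ V₂) is a d-complete subset of V₁ ⊕ V₂. -/
/-- `d`-completeness in an arbitrary vector space over a field `K`. -/
def KakeyaCompleteIn (K : Type*) [Field K] {V : Type*} [AddCommGroup V] [Module K V]
    (d : ℕ) (C : Set V) : Prop :=
  ∀ v : V, ∃ L : Submodule K V,
    Module.finrank K L = d ∧ ∀ x ∈ L, x ≠ 0 → v + x ∈ C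

theorem sumset_complete {V₁ V₂ : Type*}
    [AddCommGroup V₁] [Module (ZMod 2) V₁] [FiniteDimensional (ZMod 2) V₁]
    [AddCommGroup V₂] [Module (ZMod 2) V₂] [FiniteDimensional (ZMod 2) V₂]
    (d : ℕ) (hd₁ : d ≤ Module.finrank (ZMod 2) V₁)
    (hd₂ : d ≤ Module.finrank (ZMod 2) V₂)
    (C₁ : Set V₁) (C₂ : Set V₂)
    (h₁ : KakeyaCompleteIn (ZMod 2) d C₁) (h₂ : KakeyaCompleteIn (ZMod 2) d C₂) :
    KakeyaCompleteIn (ZMod 2) d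
      {p : V₁ × V₂ | ∃ c₁ ∈ C₁, ∃ c₂ ∈ C₂, p = (c₁, c₂)} := by
  intro v
  obtain ⟨L₁, hL₁, hC₁⟩ := h₁ v.1
  obtain ⟨L₂, hL₂, hC₂⟩ := h₂ v.2
  have e : L₁ ≃ₗ[ZMod 2] L₂ := LinearEquiv.ofFinrankEq _ _ (by rw [hL₁, hL₂])
  set ψ : L₁ →ₗ[ZMod 2] V₁ × V₂ :=
    LinearMap.prod L₁.subtype (L₂.subtype ∘ₗ e.toLinearMap) with hψ
  have hinj : Function.Injective ψ := by
    intro a b hab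
    have : (a : V₁) = b := congrArg Prod.fst hab
    exact Subtype.ext this
  refine ⟨LinearMap.range ψ, ?_, ?_⟩
  · rw [LinearMap.finrank_range_of_inj hinj, hL₁]
  · rintro x ⟨y, rfl⟩ hx
    have hy : y ≠ 0 := by rintro rfl; simp at hx
    refine ⟨v.1 + y, hC₁ y y.2 (by simpa using hy), v.2 + (e y : V₂),
      hC₂ (e y) (e y).2 ?_, rfl⟩
    simpa using fun h => hy (e.map_eq_zero_iff.mp (Subtype.ext h))
end

section
/- For integers r ≥ 1 and 1 ≤ d ≤ r−1, γ_r(d) < γ_r(d+1); in particular 0 = γ_r(0) < γ_r(1) ≤ ... ≤ γ_r(r−1) < γ_r(r) = 2^r. -/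
open Module in
/-- There is a subspace of any dimension `k ≤ r`. -/
lemma kakeya_exists_dim (r k : ℕ) (hk : k ≤ r) :
    ∃ L : Submodule (ZMod 2) (Fin r → ZMod 2), Module.finrank (ZMod 2) L = k := by
  classical
  let b := Pi.basisFun (ZMod 2) (Fin r)
  let f : Fin k → (Fin r → ZMod 2) := fun i => b (Fin.castLE hk i)
  have hf : LinearIndependent (ZMod 2) f :=
    b.linearIndependent.comp _ (Fin.castLE_injective hk)
  refine ⟨Submodule.span _ (Set.range f), ?_⟩
  rw [finrank_span_eq_card hf, Fintype.card_fin]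

open Module in
/-- Hyperplane of a `(d+1)`-dim subspace avoiding a prescribed nonzero vector. -/
lemma kakeya_exists_hyperplane (r d : ℕ) (L : Submodule (ZMod 2) (Fin r → ZMod 2))
    (hL : Module.finrank (ZMod 2) L = d + 1) (w : Fin r → ZMod 2) :
    ∃ L' : Submodule (ZMod 2) (Fin r → ZMod 2), L' ≤ L ∧ Module.finrank (ZMod 2) L' = d ∧
      (w ≠ 0 → w ∉ L') := by
  have : FiniteDimensional (ZMod 2) L := by
    have : 0 < finrank (ZMod 2) L := by omega
    exact FiniteDimensional.of_finrank_pos this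
  have hnt : Nontrivial L := by
    refine Module.nontrivial_of_finrank_pos (R := ZMod 2) ?_
    omega
  have hz : ∃ z : L, z ≠ 0 ∧ (w ∈ L → w ≠ 0 → (z : Fin r → ZMod 2) = w) := by
    by_cases hw : w ∈ L ∧ w ≠ 0
    · refine ⟨⟨w, hw.1⟩, ?_, fun _ _ => rfl⟩
      simpa [Submodule.mk_eq_zero] using hw.2
    · obtain ⟨z, hz⟩ := exists_ne (0 : L)
      exact ⟨z, hz, fun h1 h2 => absurd ⟨h1, h2⟩ hw⟩
  obtain ⟨z, hz0, hzw⟩ := hz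
  have hφ : ∃ φ : Module.Dual (ZMod 2) L, φ z ≠ 0 := by
    by_contra h
    push_neg at h
    exact hz0 ((Module.forall_dual_apply_eq_zero_iff (ZMod 2) z).mp h)
  obtain ⟨φ, hφz⟩ := hφ
  have hφz1 : φ z = 1 := by
    have : ∀ a : ZMod 2, a ≠ 0 → a = 1 := by decide
    exact this _ hφz
  refine ⟨(LinearMap.ker φ).map L.subtype, Submodule.map_subtype_le _ _, ?_, ?_⟩
  · rw [Submodule.finrank_map_subtype_eq]
    have hsurj : Function.Surjective φ := by
      intro c
      refine ⟨c • z, ?_⟩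
      rw [map_smul, hφz1, smul_eq_mul, mul_one]
    have hrange : LinearMap.range φ = ⊤ := LinearMap.range_eq_top.mpr hsurj
    have := LinearMap.finrank_range_add_finrank_ker φ
    rw [hrange, finrank_top, finrank_self, hL] at this
    omega
  · intro hw0 hwmem
    obtain ⟨y, hy, hyw⟩ := hwmem
    have hwL : w ∈ L := hyw ▸ y.2
    have : y = z := Subtype.ext (by show (y : Fin r → ZMod 2) = z; rw [hzw hwL hw0]; exact hyw)
    rw [this] at hy
    exact hφz hy

lemma kakeya_finrank_V (r : ℕ) : Module.finrank (ZMod 2) (Fin r → ZMod 2) = r := by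
  simp

theorem gamma_monotone (r : ℕ) (hr : 1 ≤ r) :
    gamma r 0 = 0 ∧ gamma r r = 2 ^ r ∧
    ∀ d : ℕ, 1 ≤ d → d ≤ r - 1 → gamma r d < gamma r (d + 1) := by
  classical
  refine ⟨?_, ?_, ?_⟩
  · -- gamma r 0 = 0
    apply Nat.sInf_eq_zero.mpr
    left
    refine ⟨∅, Finset.card_empty, fun v => ⟨⊥, finrank_bot _ _, ?_⟩⟩
    intro x hx hx0
    exact absurd ((Submodule.mem_bot _).mp hx) hx0
  · -- gamma r r = 2 ^ r
    have hcard : Fintype.card (Fin r → ZMod 2) = 2 ^ r := by simp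
    have hmem : (2 ^ r) ∈
        {n | ∃ C : Finset (Fin r → ZMod 2), C.card = n ∧ KakeyaComplete r r ↑C} := by
      refine ⟨Finset.univ, by rw [Finset.card_univ, hcard], fun v => ⟨⊤, ?_, fun x _ _ => by simp⟩⟩
      rw [finrank_top, kakeya_finrank_V]
    refine le_antisymm (Nat.sInf_le hmem) (le_csInf ⟨_, hmem⟩ ?_)
    rintro n ⟨C, rfl, hC⟩
    have hCuniv : C = Finset.univ := by
      ext u
      simp only [Finset.mem_univ, iff_true]
      have hnt : Nontrivial (Fin r → ZMod 2) :=
        ⟨0, fun _ => 1, by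
          intro h
          have := congrFun h ⟨0, by omega⟩
          simp at this⟩
      obtain ⟨v, hv⟩ := exists_ne u
      obtain ⟨L, hLr, hL⟩ := hC v
      have hLtop : L = ⊤ := Submodule.eq_top_of_finrank_eq (by rw [hLr, kakeya_finrank_V])
      have h := hL (u - v) (hLtop ▸ Submodule.mem_top) (sub_ne_zero.mpr (Ne.symm hv))
      simpa using h
    rw [hCuniv, Finset.card_univ, hcard]
  · intro d hd1 hdr
    have hd1r : d + 1 ≤ r := by omega
    have hSne : {n | ∃ C : Finset (Fin r → ZMod 2),
        C.card = n ∧ KakeyaComplete r (d + 1) ↑C}.Nonempty := by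
      obtain ⟨L, hL⟩ := kakeya_exists_dim r (d + 1) hd1r
      exact ⟨Finset.univ.card, Finset.univ, rfl, fun v => ⟨L, hL, fun x _ _ => by simp⟩⟩
    have hmem : gamma r (d + 1) ∈ {n | ∃ C : Finset (Fin r → ZMod 2),
        C.card = n ∧ KakeyaComplete r (d + 1) ↑C} := Nat.sInf_mem hSne
    obtain ⟨C, hcard, hC⟩ := hmem
    have hCne : C.Nonempty := by
      obtain ⟨L, hL, hLC⟩ := hC 0
      have : Nontrivial L := Module.nontrivial_of_finrank_pos (R := ZMod 2) (by omega)
      obtain ⟨z, hz⟩ := exists_ne (0 : L)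
      have hz' : (z : Fin r → ZMod 2) ≠ 0 := by
        simpa using hz
      have hmem' := hLC (z : Fin r → ZMod 2) z.2 hz'
      exact ⟨0 + (z : Fin r → ZMod 2), hmem'⟩
    obtain ⟨c, hc⟩ := hCne
    have hKd : KakeyaComplete r d ↑(C.erase c) := by
      intro v
      obtain ⟨L, hL, hLC⟩ := hC v
      obtain ⟨L', hL'le, hL'rank, hL'w⟩ := kakeya_exists_hyperplane r d L hL (c - v)
      refine ⟨L', hL'rank, fun x hx hx0 => ?_⟩
      have hxC : v + x ∈ C := hLC x (hL'le hx) hx0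
      have hne : v + x ≠ c := by
        intro h
        have hxw : x = c - v := by rw [← h]; abel
        have hw0 : c - v ≠ 0 := hxw ▸ hx0
        exact hL'w hw0 (hxw ▸ hx)
      exact Finset.mem_coe.mpr (Finset.mem_erase.mpr ⟨hne, hxC⟩)
    have hle : gamma r d ≤ (C.erase c).card := Nat.sInf_le ⟨C.erase c, rfl, hKd⟩
    calc gamma r d ≤ (C.erase c).card := hle
      _ < C.card := Finset.card_erase_lt_of_mem hc
      _ = gamma r (d + 1) := hcard
end

section
/- For all integers r ≥ d ≥ 0, every d-complete subset C ⊆ F_2^r satisfies |C| ≥ Σ_{j=0}^{d−1} C(r, j). -/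
/-!
Dvir's polynomial method. If `|C|` were smaller than `∑_{j<d} C(r,j)`, the dimension of the space
of multilinear polynomials of degree `< d` over `F_2`, some nonzero such polynomial `f` would
vanish on `C`. On a `d`-flat `v + L`, `f` becomes a polynomial of degree `< d` in `d` variables,
so its values over the flat sum to zero (Chevalley–Warning); as `v + (L \ {0}) ⊆ C`, this forces
`f v = 0`. Hence `f` vanishes on all of `F_2^r`, impossible for a nonzero multilinear polynomial.
-/

open MvPolynomial Finset

theorem Fintype.card_finset_card_lt {α : Type*} [Fintype α] [DecidableEq α] (d : ℕ) :
    Fintype.card {S : Finset α // S.card < d} = ∑ j ∈ range d, (Fintype.card α).choose j := by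
  rw [Fintype.card_subtype, card_eq_sum_card_fiberwise (f := Finset.card) (t := range d)
    fun S hS => by simpa using hS]
  refine Finset.sum_congr rfl fun j hj => ?_
  rw [← card_univ, ← card_powersetCard, powersetCard_eq_filter, powerset_univ, filter_filter]
  congr 1
  ext S
  simp only [mem_filter, mem_univ, true_and, and_iff_right_iff_imp]
  rintro rfl
  simpa using hj

namespace MvPolynomial

theorem totalDegree_bind₁_le {R σ τ : Type*} [CommSemiring R] (f : MvPolynomial σ R)
    (g : σ → MvPolynomial τ R) {n : ℕ} (hg : ∀ i, (g i).totalDegree ≤ n) :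
    (bind₁ g f).totalDegree ≤ f.totalDegree * n := by
  classical
  conv_lhs => rw [f.as_sum]
  rw [map_sum]
  refine (totalDegree_finsetSum _ _).trans (Finset.sup_le fun m hm => ?_)
  calc (bind₁ g (monomial m (f.coeff m))).totalDegree
      ≤ ∑ i ∈ m.support, m i * n := by
        rw [bind₁_monomial]
        refine (totalDegree_mul _ _).trans ?_
        rw [totalDegree_C, zero_add]
        exact (totalDegree_finsetProd _ _).trans <| sum_le_sum fun i _ =>
          (totalDegree_pow _ _).trans (Nat.mul_le_mul_left _ (hg i))
    _ = (m.sum fun _ e => e) * n := by rw [Finsupp.sum, sum_mul]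
    _ ≤ f.totalDegree * n := Nat.mul_le_mul_right _ (le_totalDegree hm)

section FiniteField

variable {K σ : Type*} [Field K] [Fintype K] {d : ℕ}

theorem sum_eval_add_linearCombination_eq_zero (f : MvPolynomial σ K) (v : σ → K)
    (w : Fin d → σ → K) (hf : f.totalDegree < (Fintype.card K - 1) * d) :
    ∑ t : Fin d → K, eval (v + ∑ j, t j • w j) f = 0 := by
  set g : MvPolynomial (Fin d) K := bind₁ (fun i => C (v i) + ∑ j, C (w j i) * X j) f
  have hg_eval (t : Fin d → K) : eval t g = eval (v + ∑ j, t j • w j) f := by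
    rw [eval, hom_bind₁]
    congr 1 with i
    · simp
    · simp [Finset.sum_apply, mul_comm]
  have hg_deg : g.totalDegree ≤ f.totalDegree := by
    refine (totalDegree_bind₁_le f _ fun i => ?_).trans_eq (mul_one _)
    refine (totalDegree_add _ _).trans (max_le (by simp) ?_)
    refine (totalDegree_finsetSum _ _).trans (Finset.sup_le fun j _ => ?_)
    exact (totalDegree_mul _ _).trans (by simp)
  simp_rw [← hg_eval]
  exact sum_eval_eq_zero g (by rw [Fintype.card_fin]; omega)

theorem eval_eq_zero_of_forall_eval_add_linearCombination_eq_zero {f : MvPolynomial σ K}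
    (hf : f.totalDegree < (Fintype.card K - 1) * d) (v : σ → K) (w : Fin d → σ → K)
    (hvanish : ∀ t : Fin d → K, t ≠ 0 → eval (v + ∑ j, t j • w j) f = 0) :
    eval v f = 0 := by
  simpa [Fintype.sum_eq_single 0 hvanish] using sum_eval_add_linearCombination_eq_zero f v w hf

end FiniteField

theorem exists_ne_zero_mem_forall_eval_eq_zero {K σ : Type*} [Field K]
    (W : Submodule K (MvPolynomial σ K)) (C : Finset (σ → K))
    (hC : C.card < Module.finrank K W) :
    ∃ f ∈ W, f ≠ 0 ∧ ∀ x ∈ C, eval x f = 0 := by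
  have : FiniteDimensional K W := Module.finite_of_finrank_pos (Nat.zero_lt_of_lt hC)
  let evalOn : W →ₗ[K] C → K :=
    LinearMap.funLeft K K ((↑) : C → σ → K) ∘ₗ evalₗ K σ ∘ₗ W.subtype
  obtain ⟨⟨f, hfW⟩, hf_ker, hf0⟩ := Submodule.ne_bot_iff _ |>.mp <|
    evalOn.ker_ne_bot_of_finrank_lt (by rwa [Module.finrank_fintype_fun_eq_card, Fintype.card_coe])
  exact ⟨f, hfW, fun h => hf0 (Subtype.ext h), fun x hx => congrFun hf_ker ⟨x, hx⟩⟩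

section Multilinear

variable {σ R : Type*} [CommSemiring R]

theorem prod_X_eq_monomial [DecidableEq σ] (S : Finset σ) :
    ∏ i ∈ S, X i = monomial (R := R) (Multiset.toFinsupp S.val) 1 := by
  rw [← prod_X_pow_eq_monomial, Multiset.toFinsupp_support, Finset.val_toFinset]
  refine prod_congr rfl fun i hi => ?_
  rw [Multiset.toFinsupp_apply, Multiset.count_eq_one_of_mem S.nodup hi, pow_one]

theorem linearIndependent_prod_X :
    LinearIndependent R fun S : Finset σ => ∏ i ∈ S, (X i : MvPolynomial σ R) := by
  classical
  simp_rw [prod_X_eq_monomial]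
  exact (basisMonomials σ R).linearIndependent.comp _
    (Multiset.toFinsupp.injective.comp Finset.val_injective)

theorem prod_X_mem_restrictDegree (S : Finset σ) :
    ∏ i ∈ S, (X i : MvPolynomial σ R) ∈ restrictDegree σ R 1 := by
  classical
  rw [prod_X_eq_monomial, mem_restrictDegree]
  intro m hm i
  rw [Finset.mem_singleton.mp (support_monomial_subset hm), Multiset.toFinsupp_apply]
  exact Multiset.nodup_iff_count_le_one.mp S.nodup i

theorem totalDegree_prod_X_le (S : Finset σ) :
    (∏ i ∈ S, (X i : MvPolynomial σ R)).totalDegree ≤ S.card := by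
  classical
  rw [prod_X_eq_monomial]
  exact (totalDegree_monomial_le _ _).trans_eq (Multiset.toFinsupp_sum_eq _)

variable (σ R) in
noncomputable def multilinearDegreeLT (d : ℕ) : Submodule R (MvPolynomial σ R) :=
  Submodule.span R (Set.range fun S : {S : Finset σ // S.card < d} => ∏ i ∈ S.1, X i)

theorem multilinearDegreeLT_le_restrictDegree (d : ℕ) :
    multilinearDegreeLT σ R d ≤ restrictDegree σ R 1 :=
  Submodule.span_le.mpr <| Set.range_subset_iff.mpr fun S => prod_X_mem_restrictDegree S.1

theorem totalDegree_lt_of_mem_multilinearDegreeLT {d : ℕ} (hd : 0 < d) {f : MvPolynomial σ R}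
    (hf : f ∈ multilinearDegreeLT σ R d) : f.totalDegree < d := by
  suffices multilinearDegreeLT σ R d ≤ restrictTotalDegree σ R (d - 1) by
    have := (mem_restrictTotalDegree _ _ _).mp (this hf)
    omega
  refine Submodule.span_le.mpr <| Set.range_subset_iff.mpr fun S => ?_
  rw [SetLike.mem_coe, mem_restrictTotalDegree]
  have := S.2
  have := totalDegree_prod_X_le (R := R) S.1
  omega

theorem finrank_multilinearDegreeLT {K : Type*} [Field K] [Fintype σ] [DecidableEq σ] (d : ℕ) :
    Module.finrank K (multilinearDegreeLT σ K d) =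
      ∑ j ∈ range d, (Fintype.card σ).choose j := by
  have hli : LinearIndependent K fun S : {S : Finset σ // S.card < d} => ∏ i ∈ S.1, X i :=
    linearIndependent_prod_X.comp _ Subtype.val_injective
  rw [multilinearDegreeLT, finrank_span_eq_card hli, Fintype.card_finset_card_lt]

end Multilinear

end MvPolynomial

theorem KakeyaComplete.eval_eq_zero {r d : ℕ} {C : Set (Fin r → ZMod 2)}
    (hC : KakeyaComplete r d C) {f : MvPolynomial (Fin r) (ZMod 2)} (hf : f.totalDegree < d)
    (hfC : ∀ x ∈ C, eval x f = 0) (v : Fin r → ZMod 2) : eval v f = 0 := by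
  obtain ⟨L, hLd, hLC⟩ := hC v
  let b := Module.finBasisOfFinrankEq (ZMod 2) L hLd
  have hb : LinearIndependent (ZMod 2) fun j => (b j : Fin r → ZMod 2) :=
    b.linearIndependent.map' L.subtype L.ker_subtype
  have hf' : f.totalDegree < (Fintype.card (ZMod 2) - 1) * d := by
    rwa [ZMod.card, Nat.add_one_sub_one, one_mul]
  refine eval_eq_zero_of_forall_eval_add_linearCombination_eq_zero hf' v _ fun t ht =>
    hfC _ (hLC _ (sum_mem fun j _ => L.smul_mem _ (b j).2) fun h0 => ?_)
  exact ht (funext (Fintype.linearIndependent_iff.mp hb t h0))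

theorem complete_lower_bound_general (r d : ℕ) (C : Finset (Fin r → ZMod 2))
    (hC : KakeyaComplete r d ↑C) :
    ∑ j ∈ Finset.range d, r.choose j ≤ C.card := by
  rcases Nat.eq_zero_or_pos d with rfl | hd
  · simp
  by_contra! hlt
  have hW : C.card < Module.finrank (ZMod 2) (multilinearDegreeLT (Fin r) (ZMod 2) d) := by
    rwa [finrank_multilinearDegreeLT, Fintype.card_fin]
  obtain ⟨f, hfW, hf0, hfC⟩ := exists_ne_zero_mem_forall_eval_eq_zero _ C hW
  refine hf0 (eq_zero_of_eval_eq_zero _ _ f (fun v => ?_) ?_)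
  · exact hC.eval_eq_zero (totalDegree_lt_of_mem_multilinearDegreeLT hd hfW) hfC v
  · rw [ZMod.card]
    exact multilinearDegreeLT_le_restrictDegree d hfW

theorem complete_lower_bound (r d : ℕ) (h : d ≤ r) (C : Finset (Fin r → ZMod 2))
    (hC : KakeyaComplete r d ↑C) :
    ∑ j ∈ Finset.range d, r.choose j ≤ C.card :=
  complete_lower_bound_general r d C hC
end

section
/- For all integers r ≥ d ≥ 0, every d-non-blocking subset B ⊆ F_2^r satisfies |B| ≤ Σ_{j=0}^{d} C(r, j). -/
namespace NBaux

variable {r : ℕ}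

/-- Monomial function. -/
def mon (S : Finset (Fin r)) : (Fin r → ZMod 2) → ZMod 2 := fun x => ∏ i ∈ S, x i

/-- Span of monomials of degree ≤ d. -/
def W (r d : ℕ) : Submodule (ZMod 2) ((Fin r → ZMod 2) → ZMod 2) :=
  Submodule.span (ZMod 2)
    ((Finset.image mon (Finset.univ.filter (fun S : Finset (Fin r) => S.card ≤ d)) : Finset _) : Set _)

lemma mon_mem {d : ℕ} {S : Finset (Fin r)} (hS : S.card ≤ d) : mon S ∈ W r d := by
  apply Submodule.subset_span
  simp only [Finset.coe_image, Set.mem_image, Finset.mem_coe, Finset.mem_filter]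
  exact ⟨S, by simp [hS], rfl⟩

lemma W_mono {k d : ℕ} (hkd : k ≤ d) : W r k ≤ W r d := by
  apply Submodule.span_mono
  intro f hf
  simp only [Finset.coe_image, Set.mem_image, Finset.mem_coe, Finset.mem_filter] at hf ⊢
  obtain ⟨S, hS, rfl⟩ := hf
  exact ⟨S, ⟨hS.1, hS.2.trans hkd⟩, rfl⟩

lemma zmod2_mul_self (a : ZMod 2) : a * a = a := by revert a; decide

lemma var_mul_mon (i : Fin r) (S : Finset (Fin r)) :
    (fun x => x i) * mon S = mon (insert i S) := by
  funext x
  simp only [Pi.mul_apply, mon]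
  by_cases hi : i ∈ S
  · rw [Finset.insert_eq_self.2 hi, ← Finset.mul_prod_erase S _ hi, ← mul_assoc,
      zmod2_mul_self]
  · rw [Finset.prod_insert hi]

lemma var_mul_mem {d : ℕ} (i : Fin r) {g : (Fin r → ZMod 2) → ZMod 2} (hg : g ∈ W r d) :
    (fun x => x i) * g ∈ W r (d + 1) := by
  induction hg using Submodule.span_induction with
  | mem f hf =>
      simp only [Finset.coe_image, Set.mem_image, Finset.mem_coe, Finset.mem_filter] at hf
      obtain ⟨S, hS, rfl⟩ := hf
      rw [var_mul_mon]
      exact mon_mem ((Finset.card_insert_le i S).trans (by omega))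
  | zero => simp only [mul_zero]; exact (W r (d+1)).zero_mem
  | add f g hf hg hf' hg' => 
      have : (fun x => x i) * (f + g) = (fun x => x i) * f + (fun x => x i) * g := by
        ring
      rw [this]; exact (W r (d+1)).add_mem hf' hg'
  | smul a f hf hf' =>
      have : (fun x => x i) * (a • f) = a • ((fun x => x i) * f) := by
        funext x; simp [mul_comm, mul_assoc, mul_left_comm]
      rw [this]; exact (W r (d+1)).smul_mem a hf'

lemma affine_mul_mem {d : ℕ} (c : ZMod 2) (ℓ : (Fin r → ZMod 2) →ₗ[ZMod 2] ZMod 2)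
    {g : (Fin r → ZMod 2) → ZMod 2} (hg : g ∈ W r d) :
    (fun x => (c + ℓ x) * g x) ∈ W r (d + 1) := by
  have key : (fun x => (c + ℓ x) * g x) =
      c • g + ∑ i : Fin r, (ℓ fun j => if i = j then 1 else 0) • ((fun x => x i) * g) := by
    funext x
    simp only [Pi.add_apply, Pi.smul_apply, Finset.sum_apply, Pi.mul_apply, smul_eq_mul]
    rw [LinearMap.pi_apply_eq_sum_univ ℓ x, add_mul, Finset.sum_mul]
    congr 1
    apply Finset.sum_congr rfl
    intro i _
    simp [smul_eq_mul]; ring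
  rw [key]
  refine (W r (d+1)).add_mem (W_mono (by omega) ((W r d).smul_mem c hg)) ?_
  exact (W r (d+1)).sum_mem fun i _ => (W r (d+1)).smul_mem _ (var_mul_mem i hg)

lemma prod_affine_mem {ι : Type*} [DecidableEq ι] (s : Finset ι) (c : ι → ZMod 2)
    (ℓ : ι → ((Fin r → ZMod 2) →ₗ[ZMod 2] ZMod 2)) :
    (fun x => ∏ i ∈ s, (c i + ℓ i x)) ∈ W r s.card := by
  induction s using Finset.induction with
  | empty =>
      have : (fun (x : Fin r → ZMod 2) => ∏ i ∈ (∅ : Finset ι), (c i + ℓ i x)) = mon ∅ := by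
        funext x; simp [mon]
      rw [this]; exact mon_mem (by simp)
  | @insert a s ha ih =>
      have : (fun x => ∏ i ∈ insert a s, (c i + ℓ i x)) =
          (fun x => (c a + ℓ a x) * ((fun y => ∏ i ∈ s, (c i + ℓ i y)) x)) := by
        funext x; rw [Finset.prod_insert ha]
      rw [this, Finset.card_insert_of_notMem ha]
      exact affine_mul_mem _ _ ih

lemma finrank_W_le (d : ℕ) :
    Module.finrank (ZMod 2) (W r d) ≤ ∑ j ∈ Finset.range (d + 1), r.choose j := by
  refine (finrank_span_finset_le_card _).trans ?_
  refine (Finset.card_image_le).trans ?_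
  have : (Finset.univ.filter (fun S : Finset (Fin r) => S.card ≤ d)) =
      (Finset.range (d+1)).biUnion (fun j => Finset.powersetCard j Finset.univ) := by
    ext S
    simp only [Finset.mem_filter, Finset.mem_univ, true_and, Finset.mem_biUnion,
      Finset.mem_range, Finset.mem_powersetCard]
    constructor
    · intro hS; exact ⟨S.card, by omega, Finset.subset_univ S, rfl⟩
    · rintro ⟨j, hj, -, rfl⟩; omega
  rw [this, Finset.card_biUnion]
  · apply le_of_eq
    apply Finset.sum_congr rfl
    intro j _
    rw [Finset.card_powersetCard, Finset.card_univ, Fintype.card_fin]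
  · intro a _ b _ hab
    simp only [Finset.disjoint_left, Finset.mem_powersetCard]
    rintro S ⟨-, h1⟩ ⟨-, h2⟩
    exact hab (h1.symm.trans h2)

lemma exists_ker_eq {d : ℕ} (hd : d ≤ r) (L : Submodule (ZMod 2) (Fin r → ZMod 2))
    (hL : Module.finrank (ZMod 2) L = r - d) :
    ∃ φ : (Fin r → ZMod 2) →ₗ[ZMod 2] (Fin d → ZMod 2), LinearMap.ker φ = L := by
  have hq : Module.finrank (ZMod 2) ((Fin r → ZMod 2) ⧸ L) = d := by
    have := Submodule.finrank_quotient_add_finrank L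
    rw [hL, Module.finrank_pi, Fintype.card_fin] at this
    omega
  have hfd : Module.finrank (ZMod 2) (Fin d → ZMod 2) = d := by
    rw [Module.finrank_pi, Fintype.card_fin]
  obtain ⟨e⟩ := FiniteDimensional.nonempty_linearEquiv_of_finrank_eq (hq.trans hfd.symm)
  refine ⟨e.toLinearMap ∘ₗ L.mkQ, ?_⟩
  rw [LinearMap.ker_comp, LinearEquiv.ker, Submodule.comap_bot, Submodule.ker_mkQ]

lemma prod_one_add (d : ℕ) (y : Fin d → ZMod 2) :
    (∏ i : Fin d, (1 + y i)) = if y = 0 then 1 else 0 := by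
  by_cases hy : y = 0
  · simp [hy]
  · obtain ⟨i, hi⟩ := Function.ne_iff.1 hy
    rw [if_neg hy]
    apply Finset.prod_eq_zero (Finset.mem_univ i)
    have hi' : y i ≠ 0 := by simpa using hi
    have key : ∀ a : ZMod 2, a ≠ 0 → 1 + a = 0 := by decide
    exact key _ hi'

end NBaux



theorem nonblocking_upper_bound (r d : ℕ) (h : d ≤ r) (B : Finset (Fin r → ZMod 2))
    (hB : KakeyaNonBlocking r d ↑B) :
    B.card ≤ ∑ j ∈ Finset.range (d + 1), r.choose j := by
  classical
  choose L hdim hmem using hB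
  choose φ hφ using fun v => NBaux.exists_ker_eq h (L v) (hdim v)
  set f : (Fin r → ZMod 2) → ((Fin r → ZMod 2) → ZMod 2) :=
    fun v x => ∏ i : Fin d, (1 + φ v (x - v) i) with hf
  -- f v ∈ W r d
  have hfmem : ∀ v, f v ∈ NBaux.W r d := by
    intro v
    have : f v = fun x => ∏ i ∈ (Finset.univ : Finset (Fin d)),
        ((1 - φ v v i) + ((LinearMap.proj i).comp (φ v)) x) := by
      funext x
      apply Finset.prod_congr rfl
      intro i _
      simp only [LinearMap.comp_apply, LinearMap.proj_apply, map_sub, Pi.sub_apply]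
      ring
    rw [this]
    have := NBaux.prod_affine_mem (r := r) (Finset.univ : Finset (Fin d))
      (fun i => 1 - φ v v i) (fun i => (LinearMap.proj i).comp (φ v))
    rwa [Finset.card_univ, Fintype.card_fin] at this
  -- values
  have hval : ∀ v x, f v x = if x - v ∈ L v then 1 else 0 := by
    intro v x
    rw [hf]
    simp only
    rw [NBaux.prod_one_add]
    congr 1
    simp only [eq_iff_iff]
    rw [← LinearMap.mem_ker, hφ v]
  have hdiag : ∀ b ∈ B, f b b = 1 := by
    intro b _
    rw [hval]; simp
  have hoff : ∀ b ∈ B, ∀ b' ∈ B, b ≠ b' → f b b' = 0 := by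
    intro b hb b' hb' hne
    rw [hval, if_neg]
    intro hmem'
    have hx : b' - b ≠ 0 := sub_ne_zero.2 (Ne.symm hne)
    have := hmem b (b' - b) hmem' hx
    rw [add_sub_cancel] at this
    exact this hb'
  -- linear independence
  have hli : LinearIndependent (ZMod 2)
      (fun b : {x // x ∈ B} => (⟨f ↑b, hfmem ↑b⟩ : NBaux.W r d)) := by
    apply LinearIndependent.of_comp (NBaux.W r d).subtype
    rw [Fintype.linearIndependent_iff]
    intro g hg i
    have := congrFun hg (↑i)
    simp only [Finset.sum_apply, Pi.smul_apply, Function.comp_apply, Submodule.coe_subtype,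
      smul_eq_mul, Pi.zero_apply] at this
    rw [Finset.sum_eq_single i] at this
    · rw [hdiag ↑i i.2, mul_one] at this
      exact this
    · intro b _ hbi
      rw [hoff ↑b b.2 ↑i i.2 (fun hh => hbi (Subtype.ext hh)), mul_zero]
    · intro hi; exact absurd (Finset.mem_univ i) hi
  have hcard := hli.fintype_card_le_finrank
  rw [Fintype.card_coe] at hcard
  exact hcard.trans (NBaux.finrank_W_le d)
end

section
/- For all integers r ≥ d ≥ 0, every d-non-blocking subset B ⊆ F_2^r satisfies (1 − 2^{d−r})·|B| ≤ Σ_{j=0}^{d} C(r,j) − 2^d. -/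
/-! The polynomial method. For every `v` fix a codimension-`d` subspace `L v` witnessing
non-blocking and let `P v` be the indicator of the flat `v + L v`. Over `𝔽₂` this indicator is a
product of `d` affine functions, so it lies in the space of multilinear polynomial functions of
degree `≤ d`, whose dimension is at most `D = ∑_{j ≤ d} C(r, j)`.

The `P b` with `b ∈ B` restrict to the standard basis of the functions on `B`, while the span `W`
of the `P v` with `v ∉ B` vanishes on `B`; hence `|B| + dim W ≤ D`. A basis of `W` chosen among
the `P v` has `dim W` members whose supports, flats of size `2^(r-d)`, cover the complement of `B`,
so `2^r - |B| ≤ dim W · 2^(r-d)`. Eliminating `dim W` gives the bound. -/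

open Finset Module

lemma card_filter_card_le {ι : Type*} [Fintype ι] (n : ℕ) :
    #{S : Finset ι | #S ≤ n} = ∑ j ∈ range (n + 1), (Fintype.card ι).choose j := by
  classical
  rw [card_eq_sum_card_fiberwise (f := card) (t := range (n + 1))
    fun S hS => mem_range_succ_iff.mpr (mem_filter.mp hS).2]
  refine sum_congr rfl fun j hj => ?_
  have hfib : ({S | #S ≤ n ∧ #S = j} : Finset (Finset ι)) = powersetCard j univ := by
    ext S
    simp only [mem_filter, mem_univ, true_and, mem_powersetCard_univ]
    have := mem_range_succ_iff.mp hj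
    grind
  rw [filter_filter, hfib, card_powersetCard, card_univ]

lemma Submodule.exists_linearMap_ker_eq {K V : Type*} [Field K] [AddCommGroup V]
    [Module K V] [FiniteDimensional K V] (L : Submodule K V) :
    ∃ g : V →ₗ[K] Fin (finrank K (V ⧸ L)) → K, LinearMap.ker g = L :=
  ⟨(finBasis K (V ⧸ L)).equivFun.toLinearMap ∘ₗ L.mkQ, by
    rw [LinearEquiv.ker_comp, Submodule.ker_mkQ]⟩

lemma AffineSubspace.ncard_mk' {k V P : Type*} [Ring k] [AddCommGroup V] [Module k V]
    [AddTorsor V P] (p : P) (L : Submodule k V) :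
    (AffineSubspace.mk' p L : Set P).ncard = Nat.card L := by
  have himage : (AffineSubspace.mk' p L : Set P) = (· +ᵥ p) '' (L : Set V) := by
    ext q
    refine ⟨fun hq => ⟨q -ᵥ p, AffineSubspace.mem_mk'.mp hq, vsub_vadd q p⟩, ?_⟩
    rintro ⟨v, hv, rfl⟩
    exact AffineSubspace.vadd_mem_mk' p hv
  rw [himage, Set.ncard_image_of_injective _ (vadd_right_injective p)]
  exact (Nat.card_coe_set_eq _).symm

section FunctionSpace

variable {α : Type*}

lemma support_subset_biUnion_support_of_mem_span {R : Type*} [Semiring R] {S : Set (α → R)}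
    {f : α → R} (hf : f ∈ Submodule.span R S) :
    Function.support f ⊆ ⋃ g ∈ S, Function.support g := by
  intro x hx
  by_contra hS
  simp only [Set.mem_iUnion, Function.mem_support, not_exists, not_not] at hS
  have hker : S ⊆ LinearMap.ker (LinearMap.proj x : (α → R) →ₗ[R] R) := fun g hg => hS g hg
  exact hx (Submodule.span_le.mpr hker hf)

variable {K : Type*} [Field K]

lemma ncard_biUnion_support_le [Fintype α] {S : Set (α → K)} {s : ℕ}
    (hS : ∀ f ∈ S, (Function.support f).ncard ≤ s) :
    (⋃ f ∈ S, Function.support f).ncard ≤ finrank K (Submodule.span K S) * s := by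
  obtain ⟨b, hbS, hspan, hli⟩ := exists_linearIndependent K S
  have : Fintype b := hli.setFinite.fintype
  have hcover : ⋃ f ∈ S, Function.support f ⊆ ⋃ g ∈ b.toFinset, Function.support g := by
    simp only [Set.mem_toFinset]
    refine Set.iUnion₂_subset fun f hf => support_subset_biUnion_support_of_mem_span ?_
    exact hspan ▸ Submodule.subset_span hf
  calc (⋃ f ∈ S, Function.support f).ncard
      ≤ (⋃ g ∈ b.toFinset, Function.support g).ncard := Set.ncard_le_ncard hcover
    _ ≤ ∑ g ∈ b.toFinset, (Function.support g).ncard := b.toFinset.set_ncard_biUnion_le _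
    _ ≤ #b.toFinset * s :=
        sum_le_card_nsmul _ _ _ fun g hg => hS g (hbS (Set.mem_toFinset.mp hg))
    _ = finrank K (Submodule.span K S) * s := by
        rw [← hspan, finrank_span_set_eq_card hli]

lemma card_add_finrank_le_finrank [Fintype α] {M W : Submodule K (α → K)} {B : Finset α}
    (hWM : W ≤ M) (hW : ∀ f ∈ W, ∀ b ∈ B, f b = 0)
    (hM : ∀ b ∈ B, ∃ p ∈ M, p b = 1 ∧ ∀ b' ∈ B, b' ≠ b → p b' = 0) :
    #B + finrank K W ≤ finrank K M := by
  classical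
  let res : M →ₗ[K] B → K := LinearMap.funLeft K K ((↑) : B → α) ∘ₗ M.subtype
  have hsurj : LinearMap.range res = ⊤ := by
    rw [eq_top_iff, ← (Pi.basisFun K B).span_eq, Submodule.span_le]
    rintro _ ⟨b, rfl⟩
    obtain ⟨p, hpM, hpb, hp⟩ := hM b b.2
    refine ⟨⟨p, hpM⟩, funext fun b' => ?_⟩
    by_cases h : b' = b
    · simp [res, h, hpb]
    · simp [res, h, hp b' b'.2 (Subtype.coe_ne_coe.mpr h)]
  have hker : W.comap M.subtype ≤ LinearMap.ker res :=
    fun f hf => funext fun b => hW f hf b b.2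
  calc #B + finrank K W = finrank K (LinearMap.range res) + finrank K (W.comap M.subtype) := by
        rw [hsurj, finrank_top, Module.finrank_fintype_fun_eq_card, Fintype.card_coe,
          (Submodule.comapSubtypeEquivOfLe hWM).finrank_eq]
    _ ≤ finrank K (LinearMap.range res) + finrank K (LinearMap.ker res) := by
        gcongr
        exact Submodule.finrank_mono hker
    _ = finrank K M := res.finrank_range_add_finrank_ker

lemma exists_card_add_le_finrank_and_ncard_compl_le [Fintype α] {M : Submodule K (α → K)}
    {B : Finset α} {s : ℕ} (P : α → α → K) (hPM : ∀ v, P v ∈ M) (hPself : ∀ v, P v v = 1)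
    (hPB : ∀ v, ∀ b ∈ B, b ≠ v → P v b = 0) (hsupp : ∀ v, (Function.support (P v)).ncard ≤ s) :
    ∃ t : ℕ, #B + t ≤ finrank K M ∧ (↑B : Set α)ᶜ.ncard ≤ t * s := by
  let W := Submodule.span K (P '' (↑B)ᶜ)
  have hWB : ∀ f ∈ W, ∀ b ∈ B, f b = 0 := fun f hf b hb => by
    by_contra hfb
    obtain ⟨_, ⟨v, hv, rfl⟩, hvb⟩ :=
      Set.mem_iUnion₂.mp (support_subset_biUnion_support_of_mem_span hf hfb)
    exact hvb (hPB v b hb (ne_of_mem_of_not_mem hb hv))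
  have hcover : (↑B : Set α)ᶜ ⊆ ⋃ f ∈ P '' (↑B)ᶜ, Function.support f :=
    fun v hv => Set.mem_biUnion (Set.mem_image_of_mem P hv) (by simp [hPself])
  refine ⟨finrank K W, ?_, ?_⟩
  · refine card_add_finrank_le_finrank ?_ hWB fun b _ => ⟨P b, hPM b, hPself b, hPB b⟩
    exact Submodule.span_le.mpr (Set.image_subset_iff.mpr fun v _ => hPM v)
  · refine (Set.ncard_le_ncard hcover).trans (ncard_biUnion_support_le ?_)
    rintro _ ⟨v, -, rfl⟩
    exact hsupp v

end FunctionSpace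

namespace F2Poly

variable {ι : Type*}

def monomial (S : Finset ι) : (ι → ZMod 2) → ZMod 2 := fun x => ∏ i ∈ S, x i

variable (ι) in
def degLE (n : ℕ) : Submodule (ZMod 2) ((ι → ZMod 2) → ZMod 2) :=
  Submodule.span (ZMod 2) (monomial '' {S | #S ≤ n})

lemma prod_eq_ite {κ : Type*} (s : Finset κ) (a : κ → ZMod 2) :
    ∏ i ∈ s, a i = if ∀ i ∈ s, a i = 1 then 1 else 0 := by
  split_ifs with h
  · exact prod_eq_one h
  · push Not at h
    obtain ⟨i, hi, hai⟩ := h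
    exact prod_eq_zero hi (by generalize a i = c at hai; revert c; decide)

lemma monomial_mul_monomial [DecidableEq ι] (S T : Finset ι) :
    monomial S * monomial T = monomial (S ∪ T) := by
  funext x
  simp only [Pi.mul_apply, monomial, prod_eq_ite, mem_union]
  split_ifs <;> grind

lemma degLE_mul_le (a b : ℕ) : degLE ι a * degLE ι b ≤ degLE ι (a + b) := by
  classical
  rw [degLE, degLE, Submodule.span_mul_span, Submodule.span_le]
  rintro _ ⟨_, ⟨S, hS, rfl⟩, _, ⟨T, hT, rfl⟩, rfl⟩
  exact Submodule.subset_span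
    ⟨S ∪ T, (card_union_le S T).trans (add_le_add hS hT), (monomial_mul_monomial S T).symm⟩

lemma monomial_mem_degLE {S : Finset ι} {n : ℕ} (h : #S ≤ n) : monomial S ∈ degLE ι n :=
  Submodule.subset_span (Set.mem_image_of_mem _ h)

lemma prod_mem_degLE {κ : Type*} (s : Finset κ) {g : κ → (ι → ZMod 2) → ZMod 2}
    (hg : ∀ i ∈ s, g i ∈ degLE ι 1) : ∏ i ∈ s, g i ∈ degLE ι #s := by
  induction s using Finset.cons_induction with
  | empty => exact monomial_mem_degLE (S := ∅) le_rfl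
  | cons i s his ih =>
    rw [prod_cons, card_cons, add_comm]
    exact degLE_mul_le _ _ (Submodule.mul_mem_mul (hg i (mem_cons_self i s))
      (ih fun j hj => hg j (mem_cons_of_mem hj)))

lemma affine_mem_degLE_one [Fintype ι] (φ : (ι → ZMod 2) →ₗ[ZMod 2] ZMod 2) (c : ZMod 2) :
    (fun x => c + φ x) ∈ degLE ι 1 := by
  classical
  have hφ : (fun x => c + φ x) =
      c • monomial ∅ + ∑ j, φ (fun k => if j = k then 1 else 0) • monomial {j} := by
    funext x
    simp [monomial, LinearMap.pi_apply_eq_sum_univ φ x, mul_comm]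
  rw [hφ]
  exact add_mem (Submodule.smul_mem _ _ (monomial_mem_degLE (by simp)))
    (sum_mem fun j _ => Submodule.smul_mem _ _ (monomial_mem_degLE (by simp)))

-- Over `𝔽₂`, `∏ᵢ (1 + gᵢ(x - v))` is `1` exactly when `g (x - v) = 0`.
lemma indicator_mk'_ker_mem_degLE [Fintype ι] {d : ℕ}
    (g : (ι → ZMod 2) →ₗ[ZMod 2] Fin d → ZMod 2) (v : ι → ZMod 2) :
    (AffineSubspace.mk' v (LinearMap.ker g) : Set (ι → ZMod 2)).indicator 1 ∈ degLE ι d := by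
  have hind : (AffineSubspace.mk' v (LinearMap.ker g) : Set (ι → ZMod 2)).indicator 1 =
      ∏ i, fun x => (1 - g v i) + (LinearMap.proj i ∘ₗ g) x := by
    classical
    funext x
    simp only [Set.indicator_apply, SetLike.mem_coe, AffineSubspace.mem_mk', vsub_eq_sub,
      LinearMap.mem_ker, funext_iff, prod_apply, LinearMap.comp_apply, LinearMap.proj_apply,
      prod_eq_ite, map_sub, Pi.sub_apply, Pi.one_apply, Pi.zero_apply]
    simp [sub_add_eq_add_sub, add_sub_assoc]
  rw [hind]
  simpa using prod_mem_degLE univ fun i _ => affine_mem_degLE_one (LinearMap.proj i ∘ₗ g) _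

lemma indicator_mk'_mem_degLE [Fintype ι] (L : Submodule (ZMod 2) (ι → ZMod 2))
    (v : ι → ZMod 2) :
    (AffineSubspace.mk' v L : Set (ι → ZMod 2)).indicator 1 ∈
      degLE ι (finrank (ZMod 2) ((ι → ZMod 2) ⧸ L)) := by
  obtain ⟨g, hg⟩ := L.exists_linearMap_ker_eq
  simpa only [hg] using indicator_mk'_ker_mem_degLE g v

lemma finrank_degLE_le [Fintype ι] (n : ℕ) :
    finrank (ZMod 2) (degLE ι n) ≤ ∑ j ∈ range (n + 1), (Fintype.card ι).choose j := by
  classical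
  let 𝒮 : Finset (Finset ι) := {S | #S ≤ n}
  have hdeg : degLE ι n = Submodule.span (ZMod 2) ↑(𝒮.image monomial) := by
    simp [degLE, 𝒮]
  rw [hdeg, ← card_filter_card_le]
  exact (finrank_span_finset_le_card (R := ZMod 2) (𝒮.image monomial)).trans card_image_le

end F2Poly

lemma one_sub_two_rpow_mul_le {r d : ℕ} (h : d ≤ r) {b t D : ℝ} (hdim : b + t ≤ D)
    (hcover : 2 ^ r ≤ b + t * 2 ^ (r - d)) : (1 - 2 ^ ((d : ℝ) - r)) * b ≤ D - 2 ^ d := by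
  set q : ℝ := 2 ^ ((d : ℝ) - r)
  have hq₁ : q * 2 ^ (r - d) = 1 := by
    rw [← Real.rpow_natCast, Nat.cast_sub h, ← Real.rpow_add two_pos]; simp
  have hq₂ : q * 2 ^ r = 2 ^ d := by
    rw [← Real.rpow_natCast, ← Real.rpow_add two_pos]; simp
  have hdiv : 2 ^ d ≤ q * b + t := calc
    (2 : ℝ) ^ d = q * 2 ^ r := hq₂.symm
    _ ≤ q * (b + t * 2 ^ (r - d)) := mul_le_mul_of_nonneg_left hcover (by positivity)
    _ = q * b + t := by linear_combination t * hq₁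
  linarith

namespace KakeyaNonBlocking

open F2Poly

lemma exists_flat_indicator {r d : ℕ} (h : d ≤ r) {B : Finset (Fin r → ZMod 2)}
    (hB : KakeyaNonBlocking r d ↑B) (v : Fin r → ZMod 2) :
    ∃ p ∈ degLE (Fin r) d, p v = 1 ∧ (∀ b ∈ B, b ≠ v → p b = 0) ∧
      (Function.support p).ncard = 2 ^ (r - d) := by
  obtain ⟨L, hL, hLB⟩ := hB v
  have hcodim : finrank (ZMod 2) ((Fin r → ZMod 2) ⧸ L) = d := by
    have := L.finrank_quotient_add_finrank
    rw [hL, finrank_fin_fun] at this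
    omega
  refine ⟨(AffineSubspace.mk' v L : Set _).indicator 1, hcodim ▸ indicator_mk'_mem_degLE L v,
    Set.indicator_of_mem (AffineSubspace.self_mem_mk' v L) 1, fun b hb hbv => ?_, ?_⟩
  · refine Set.indicator_of_notMem (fun hmem => ?_) 1
    exact hLB (b - v) (AffineSubspace.mem_mk'.mp hmem) (sub_ne_zero_of_ne hbv) (by simpa using hb)
  · rw [Set.support_indicator, Function.support_one, Set.inter_univ, AffineSubspace.ncard_mk',
      Module.natCard_eq_pow_finrank (K := ZMod 2), hL, Nat.card_zmod]

end KakeyaNonBlocking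

theorem nonblocking_upper_bound_strong (r d : ℕ) (h : d ≤ r)
    (B : Finset (Fin r → ZMod 2)) (hB : KakeyaNonBlocking r d ↑B) :
    (1 - (2 : ℝ) ^ ((d : ℝ) - (r : ℝ))) * (B.card : ℝ) ≤
      (∑ j ∈ Finset.range (d + 1), (r.choose j : ℝ)) - 2 ^ d := by
  choose P hPdeg hPself hPB hsupp using hB.exists_flat_indicator h
  obtain ⟨t, hdim, hcover⟩ :=
    exists_card_add_le_finrank_and_ncard_compl_le P hPdeg hPself hPB fun v => (hsupp v).le
  have hdeg : finrank (ZMod 2) (F2Poly.degLE (Fin r) d) ≤ ∑ j ∈ range (d + 1), r.choose j := by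
    simpa using F2Poly.finrank_degLE_le (ι := Fin r) d
  have hcompl : #B + (↑B : Set (Fin r → ZMod 2))ᶜ.ncard = 2 ^ r := by
    simpa using Set.ncard_add_ncard_compl (↑B : Set (Fin r → ZMod 2))
  have hcover' : 2 ^ r ≤ #B + t * 2 ^ (r - d) := hcompl ▸ Nat.add_le_add_left hcover #B
  exact one_sub_two_rpow_mul_le h (t := t) (by exact_mod_cast hdim.trans hdeg)
    (by exact_mod_cast hcover')
end

section
/- For d ≥ 1, a polynomial in d variables over F_2 of total degree strictly less than d cannot vanish at all points of F_2^d except exactly one; i.e., if P vanishes on F_2^d \ {a} for some point a, then P(a) = 0 as well. -/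
theorem low_degree_vanishing (d : ℕ) (hd : 1 ≤ d) (P : MvPolynomial (Fin d) (ZMod 2))
    (hdeg : P.totalDegree < d) (a : Fin d → ZMod 2)
    (h : ∀ x : Fin d → ZMod 2, x ≠ a → MvPolynomial.eval x P = 0) :
    MvPolynomial.eval a P = 0 := by
  classical
  have key : ∑ x : Fin d → ZMod 2, MvPolynomial.eval x P = 0 := by
    have : ∀ x : Fin d → ZMod 2, MvPolynomial.eval x P =
        ∑ m ∈ P.support, P.coeff m * ∏ i, x i ^ m i := fun x => MvPolynomial.eval_eq' x P
    simp_rw [this]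
    rw [Finset.sum_comm]
    apply Finset.sum_eq_zero
    intro m hm
    rw [← Finset.mul_sum]
    have hsum : (∑ x : Fin d → ZMod 2, ∏ i, x i ^ m i) = ∏ i, ∑ t : ZMod 2, t ^ m i := by
      rw [Finset.prod_univ_sum]
      rw [← Fintype.piFinset_univ]
    rw [hsum]
    -- find a variable missing from m
    obtain ⟨i₀, hi₀⟩ : ∃ i : Fin d, m i = 0 := by
      by_contra hc
      push_neg at hc
      have hle : d ≤ m.sum fun _ e => e := by
        have : m.support = Finset.univ := by
          ext i; simp [Finsupp.mem_support_iff, hc i]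
        rw [Finsupp.sum, this]
        calc d = ∑ _i : Fin d, 1 := by simp
          _ ≤ ∑ i : Fin d, m i := Finset.sum_le_sum fun i _ =>
              Nat.one_le_iff_ne_zero.mpr (hc i)
      have := MvPolynomial.le_totalDegree hm
      omega
    have : (∑ t : ZMod 2, t ^ m i₀) = 0 := by
      rw [hi₀]; decide
    rw [Finset.prod_eq_zero (Finset.mem_univ i₀) this, mul_zero]
  have : ∑ x : Fin d → ZMod 2, MvPolynomial.eval x P = MvPolynomial.eval a P := by
    rw [← Finset.sum_subset (Finset.subset_univ {a})]
    · simp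
    · intro x _ hx
      exact h x (by simpa using hx)
  rw [← this, key]
end

section
/- For integers r ≥ d ≥ 3, γ_r(d) < K_d · 2^{(1/2 − ε_d) r}, where ε_d = 1/(2(2^d − 1)) and K_d = (2^d − 1)·2^{2^{d−1} − 3/2 + ε_d}. In particular γ_r(3) = O(2^{3r/7}). -/
/-!
Split `F_2^r = F_2^d × F_2^(r-d)` and fix vectors `h_i ∈ F_2^d`, one for each of the last
`r - d` coordinates. Given `v`, the `d`-dimensional subspace of vectors
`(s, (⟪h_i, s⟫ v_i)_i)` moves `v` into the set of points whose `i`-th tail coordinate vanishes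
whenever `⟪h_i, s⟫ = 1`; the union over `s ≠ 0` of these coordinate subspaces is therefore
`d`-complete, of size at most `∑_{s ≠ 0} 2^(d + #{i | ⟪h_i, s⟫ = 0})`.

Let the `h_i` run periodically through the `2^d - 1` nonzero vectors, i.e. through the columns
of the simplex code. Over each period `(⟪h_i, s⟫)_i` is a nonzero simplex codeword, with exactly
`2^(d-1) - 1` zeros, so only the incomplete last period needs care. For `d ≥ 4` bounding it
crudely suffices; for `d = 3` the order of the seven columns matters and the seven possible
partial periods are checked by computation.
-/

open Finset Function Matrix

theorem Nat.count_mul_add_of_periodic {p : ℕ → Prop} [DecidablePred p] {n : ℕ}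
    (hp : Periodic p n) (q j : ℕ) :
    Nat.count p (q * n + j) = q * Nat.count p n + Nat.count p j := by
  induction q with
  | zero => simp
  | succ q ih =>
    rw [add_mul, one_mul, add_right_comm, Nat.count_add']
    simp only [show (fun k => p (k + n)) = p from funext hp, ih]
    ring

theorem card_filter_dotProduct_eq_zero {K ι : Type*} [Field K] [Fintype K] [DecidableEq K]
    [Fintype ι] [DecidableEq ι] {t : ι → K} (ht : t ≠ 0) :
    #{w | w ⬝ᵥ t = 0} = Fintype.card K ^ (Fintype.card ι - 1) := by
  set f : Module.Dual K (ι → K) := dotProductEquiv K ι t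
  have hf : f ≠ 0 := (LinearEquiv.map_ne_zero_iff _).2 ht
  have hker : Module.finrank K (LinearMap.ker f) = Fintype.card ι - 1 := by
    have := Module.Dual.finrank_ker_add_one_of_ne_zero hf
    rw [Module.finrank_fintype_fun_eq_card] at this
    omega
  calc #{w | w ⬝ᵥ t = 0} = Nat.card {w // w ⬝ᵥ t = 0} := by
        rw [Nat.card_eq_fintype_card, Fintype.card_subtype]
    _ = Nat.card (LinearMap.ker f) :=
        Nat.card_congr (Equiv.subtypeEquivRight fun w => by simp [f, dotProduct_comm])
    _ = _ := by rw [Module.natCard_eq_pow_finrank (K := K), Nat.card_eq_fintype_card, hker]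

def Fin.cycle {α : Type*} {n : ℕ} [NeZero n] (e : Fin n → α) (u : ℕ) : α :=
  e (Fin.ofNat n u)

theorem Fin.periodic_cycle {α : Type*} {n : ℕ} [NeZero n] (e : Fin n → α) :
    Periodic (Fin.cycle e) n :=
  fun u => congrArg e (Fin.ext (by simp))

theorem Fin.injOn_cycle {α : Type*} {n : ℕ} [NeZero n] {e : Fin n → α} (he : Injective e) :
    Set.InjOn (Fin.cycle e) (Set.Iio n) := by
  intro u hu u' hu' huu'
  simpa [Nat.mod_eq_of_lt hu, Nat.mod_eq_of_lt hu'] using congrArg Fin.val (he huu')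

theorem lt_mul_two_rpow_of_pow_lt {a N k : ℕ} (hN : N ≠ 0) (h : a ^ N < N ^ N * 2 ^ k) :
    (a : ℝ) < N * 2 ^ ((k : ℝ) / N) := by
  have hN' : (N : ℝ) ≠ 0 := Nat.cast_ne_zero.2 hN
  rw [← pow_lt_pow_iff_left₀ (by positivity) (by positivity) hN, mul_pow,
    ← Real.rpow_mul_natCast zero_le_two, div_mul_cancel₀ _ hN', Real.rpow_natCast]
  exact_mod_cast h

theorem add_four_le_two_pow {k : ℕ} (hk : 3 ≤ k) : k + 4 ≤ 2 ^ k := by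
  induction k, hk using Nat.le_induction with
  | base => norm_num
  | succ k _ ih => rw [pow_succ]; omega

namespace Kakeya

variable {r d : ℕ}

theorem gamma_le_card {C : Finset (Fin r → ZMod 2)} (hC : KakeyaComplete r d C) :
    gamma r d ≤ #C :=
  Nat.sInf_le ⟨C, rfl, hC⟩

def splitFin (hr : d ≤ r) : Fin d ⊕ Fin (r - d) ≃ Fin r :=
  finSumFinEquiv.trans (finCongr (Nat.add_sub_cancel' hr))

def cube (hr : d ≤ r) (h : ℕ → Fin d → ZMod 2) (t : Fin d → ZMod 2) :
    Finset (Fin r → ZMod 2) :=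
  Fintype.piFinset fun p => Sum.elim (fun _ => univ)
    (fun i : Fin (r - d) => if h i ⬝ᵥ t = 0 then univ else {0}) ((splitFin hr).symm p)

theorem card_cube (hr : d ≤ r) (h : ℕ → Fin d → ZMod 2) (t : Fin d → ZMod 2) :
    #(cube hr h t) = 2 ^ (d + Nat.count (fun i => h i ⬝ᵥ t = 0) (r - d)) := by
  rw [cube, Fintype.card_piFinset, ← (splitFin hr).prod_comp, Fintype.prod_sum_type]
  simp only [Equiv.symm_apply_apply, Sum.elim_inl, Sum.elim_inr, card_univ, ZMod.card,
    prod_const, Fintype.card_fin, apply_ite card, card_singleton]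
  rw [Fin.prod_univ_eq_prod_range (fun i => if h i ⬝ᵥ t = 0 then 2 else 1), prod_ite,
    prod_const, prod_const_one, mul_one, ← Nat.count_eq_card_filter_range, pow_add]

theorem kakeyaComplete_biUnion_cube (hr : d ≤ r) (h : ℕ → Fin d → ZMod 2) :
    KakeyaComplete r d ↑(({t | t ≠ 0} : Finset (Fin d → ZMod 2)).biUnion (cube hr h)) := by
  intro v
  set E := splitFin hr
  -- `range M = {(s, (⟪h_i, s⟫ v_i)_i)}`
  let M : Matrix (Fin r) (Fin d) (ZMod 2) :=
    Matrix.of fun p => Sum.elim (fun k => Pi.single k 1)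
      (fun i : Fin (r - d) => v (E (.inr i)) • h i) (E.symm p)
  have hM_inl (s : Fin d → ZMod 2) (k : Fin d) : (M *ᵥ s) (E (.inl k)) = s k := by
    simp [M, mulVec]
  have hM_inr (s : Fin d → ZMod 2) (i : Fin (r - d)) :
      (M *ᵥ s) (E (.inr i)) = v (E (.inr i)) * (h i ⬝ᵥ s) := by
    simp only [M, mulVec, of_apply, Equiv.symm_apply_apply, Sum.elim_inr]
    exact smul_dotProduct _ _ _
  have hinj : Injective (mulVecLin M) := fun s s' hss =>
    funext fun k => by simpa [hM_inl] using congrFun hss (E (.inl k))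
  refine ⟨LinearMap.range (mulVecLin M), by
    rw [LinearMap.finrank_range_of_inj hinj, Module.finrank_fin_fun], ?_⟩
  rintro _ ⟨s, rfl⟩ hs
  have hs0 : s ≠ 0 := by rintro rfl; simp at hs
  refine mem_biUnion.2 ⟨s, by simpa using hs0, Fintype.mem_piFinset.2 fun p => ?_⟩
  obtain ⟨k | i, rfl⟩ := E.surjective p
  · simp [E]
  · simp only [E, Equiv.symm_apply_apply, Sum.elim_inr]
    split_ifs with hi
    · exact mem_univ _
    · have h1 : h i ⬝ᵥ s = 1 := by generalize h i ⬝ᵥ s = a at hi; revert a; decide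
      rw [mem_singleton, Pi.add_apply, mulVecLin_apply, hM_inr, h1, mul_one,
        CharTwo.add_self_eq_zero]

theorem gamma_le_sum_two_pow_count (hr : d ≤ r) (h : ℕ → Fin d → ZMod 2) :
    gamma r d ≤ ∑ t : Fin d → ZMod 2 with t ≠ 0,
      2 ^ (d + Nat.count (fun i => h i ⬝ᵥ t = 0) (r - d)) :=
  calc gamma r d ≤ #(({t | t ≠ 0} : Finset (Fin d → ZMod 2)).biUnion (cube hr h)) :=
        gamma_le_card (kakeyaComplete_biUnion_cube hr h)
    _ ≤ ∑ t : Fin d → ZMod 2 with t ≠ 0, #(cube hr h t) := card_biUnion_le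
    _ = _ := by simp only [card_cube]

theorem card_filter_ne_zero : #{t : Fin d → ZMod 2 | t ≠ 0} = 2 ^ d - 1 := by
  rw [filter_ne', card_erase_of_mem (mem_univ _), card_univ]
  simp

theorem exists_injective_fin_ne_zero {n : ℕ} (hn : 2 ^ d - 1 = n) :
    ∃ e : Fin n → Fin d → ZMod 2, Injective e ∧ ∀ i, e i ≠ 0 := by
  have hcard : Fintype.card {t : Fin d → ZMod 2 // t ≠ 0} = n := by
    rw [Fintype.card_subtype, card_filter_ne_zero, hn]
  set e := (Fintype.equivFinOfCardEq hcard).symm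
  exact ⟨Subtype.val ∘ e, Subtype.val_injective.comp e.injective, fun i => (e i).2⟩

theorem count_dotProduct_eq_zero_le {g : ℕ → Fin d → ZMod 2} {n : ℕ}
    (hinj : Set.InjOn g (Set.Iio n)) (hne : ∀ u, g u ≠ 0) {t : Fin d → ZMod 2}
    (ht : t ≠ 0) : Nat.count (fun u => g u ⬝ᵥ t = 0) n ≤ 2 ^ (d - 1) - 1 := by
  have hker := card_filter_dotProduct_eq_zero ht
  simp only [ZMod.card, Fintype.card_fin] at hker
  rw [Nat.count_eq_card_filter_range, ← hker,
    ← card_erase_of_mem (s := {w | w ⬝ᵥ t = 0}) (a := 0) (by simp)]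
  refine card_le_card_of_injOn g (fun u hu => ?_) (hinj.mono fun u hu => ?_) <;> simp_all

theorem count_dotProduct_eq_zero_le_mul_add {g : ℕ → Fin d → ZMod 2} {n : ℕ}
    (hper : Periodic g n) (hinj : Set.InjOn g (Set.Iio n)) (hne : ∀ u, g u ≠ 0)
    {t : Fin d → ZMod 2} (ht : t ≠ 0) (q j : ℕ) :
    Nat.count (fun u => g u ⬝ᵥ t = 0) (q * n + j) ≤
      q * (2 ^ (d - 1) - 1) + Nat.count (fun u => g u ⬝ᵥ t = 0) j := by
  rw [Nat.count_mul_add_of_periodic (fun u => by rw [hper u])]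
  gcongr
  exact count_dotProduct_eq_zero_le hinj hne ht

/-- Listing a basis first keeps the partial periods small enough for `d = 3`. -/
def simplexColumnsThree : Fin 7 → Fin 3 → ZMod 2 :=
  ![![0, 0, 1], ![0, 1, 0], ![1, 0, 0], ![1, 1, 1], ![0, 1, 1], ![1, 0, 1], ![1, 1, 0]]

theorem simplexColumnsThree_injective : Injective simplexColumnsThree := by decide

theorem simplexColumnsThree_ne_zero (i : Fin 7) : simplexColumnsThree i ≠ 0 := by
  revert i; decide

theorem sum_two_pow_count_simplexColumnsThree_pow_lt : ∀ j < 7,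
    (∑ t : Fin 3 → ZMod 2 with t ≠ 0,
      2 ^ Nat.count (fun u => Fin.cycle simplexColumnsThree u ⬝ᵥ t = 0) j) ^ 7 <
      7 ^ 7 * 2 ^ (6 + 3 * j) := by
  decide

theorem gamma_three_pow_lt (hr : 3 ≤ r) : gamma r 3 ^ 7 < 7 ^ 7 * 2 ^ (3 * (2 * 3 + r)) := by
  obtain ⟨q, j, hj, rfl⟩ : ∃ q j, j < 7 ∧ r = 3 + (q * 7 + j) :=
    ⟨(r - 3) / 7, (r - 3) % 7, Nat.mod_lt _ (by norm_num), by omega⟩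
  set G := ∑ t : Fin 3 → ZMod 2 with t ≠ 0,
    2 ^ Nat.count (fun u => Fin.cycle simplexColumnsThree u ⬝ᵥ t = 0) j
  have hγ : gamma (3 + (q * 7 + j)) 3 ≤ 2 ^ (3 + 3 * q) * G := by
    refine (gamma_le_sum_two_pow_count (by omega) (Fin.cycle simplexColumnsThree)).trans ?_
    rw [mul_sum]
    refine sum_le_sum fun t ht => ?_
    rw [← pow_add, Nat.add_sub_cancel_left]
    have := count_dotProduct_eq_zero_le_mul_add (Fin.periodic_cycle _)
      (Fin.injOn_cycle simplexColumnsThree_injective) (fun u => simplexColumnsThree_ne_zero _)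
      (mem_filter.1 ht).2 q j
    norm_num at this
    exact Nat.pow_le_pow_right two_pos (by omega)
  calc gamma (3 + (q * 7 + j)) 3 ^ 7 ≤ (2 ^ (3 + 3 * q) * G) ^ 7 := Nat.pow_le_pow_left hγ 7
    _ = 2 ^ (7 * (3 + 3 * q)) * G ^ 7 := by ring
    _ < 2 ^ (7 * (3 + 3 * q)) * (7 ^ 7 * 2 ^ (6 + 3 * j)) :=
        Nat.mul_lt_mul_of_pos_left (sum_two_pow_count_simplexColumnsThree_pow_lt j hj)
          (by positivity)
    _ = 7 ^ 7 * 2 ^ (3 * (2 * 3 + (3 + (q * 7 + j)))) := by ring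

theorem mul_two_mul_add_one_lt {m q j : ℕ} (hdm : d + 2 ≤ m) :
    (d + (q * m + min j m)) * (2 * m + 1) < m * (2 * m + (d + (q * (2 * m + 1) + j))) := by
  rcases le_total j m with hjm | hmj
  · rw [min_eq_left hjm]
    nlinarith
  · rw [min_eq_right hmj]
    nlinarith

theorem gamma_pow_lt_of_four_le {m : ℕ} (hd : 4 ≤ d) (hm : 2 ^ (d - 1) = m + 1) (hr : d ≤ r) :
    gamma r d ^ (2 * m + 1) < (2 * m + 1) ^ (2 * m + 1) * 2 ^ (m * (2 * m + r)) := by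
  have hN : 2 ^ d - 1 = 2 * m + 1 := by
    rw [← Nat.sub_add_cancel (by omega : 1 ≤ d), pow_succ, hm]; omega
  have hdm : d + 2 ≤ m := by have := add_four_le_two_pow (k := d - 1) (by omega); omega
  obtain ⟨e, he, hne⟩ := exists_injective_fin_ne_zero hN
  obtain ⟨q, j, hj, rfl⟩ : ∃ q j, j < 2 * m + 1 ∧ r = d + (q * (2 * m + 1) + j) :=
    ⟨(r - d) / (2 * m + 1), (r - d) % (2 * m + 1), Nat.mod_lt _ (by omega), by
      have := Nat.div_add_mod (r - d) (2 * m + 1); rw [mul_comm] at this; omega⟩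
  set c := d + (q * m + min j m)
  have hcount (t : Fin d → ZMod 2) (ht : t ≠ 0) :
      Nat.count (fun u => Fin.cycle e u ⬝ᵥ t = 0) (q * (2 * m + 1) + j) ≤
        q * m + min j m := by
    have hfull := count_dotProduct_eq_zero_le_mul_add (Fin.periodic_cycle e)
      (Fin.injOn_cycle he) (fun u => hne _) ht q j
    have hpart := (Nat.count_monotone (fun u => Fin.cycle e u ⬝ᵥ t = 0) hj.le).trans
      (count_dotProduct_eq_zero_le (Fin.injOn_cycle he) (fun u => hne _) ht)
    have := Nat.count_le (p := fun u => Fin.cycle e u ⬝ᵥ t = 0) (n := j)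
    rw [hm, Nat.add_sub_cancel] at hfull hpart
    omega
  have hγ : gamma (d + (q * (2 * m + 1) + j)) d ≤ (2 * m + 1) * 2 ^ c := by
    refine (gamma_le_sum_two_pow_count (by omega) (Fin.cycle e)).trans ?_
    calc _ ≤ ∑ t : Fin d → ZMod 2 with t ≠ 0, 2 ^ c := by
          refine sum_le_sum fun t ht => pow_le_pow_right₀ one_le_two ?_
          rw [Nat.add_sub_cancel_left]
          exact Nat.add_le_add_left (hcount t (mem_filter.1 ht).2) d
      _ = _ := by rw [sum_const, card_filter_ne_zero, hN, smul_eq_mul]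
  calc gamma (d + (q * (2 * m + 1) + j)) d ^ (2 * m + 1) ≤ ((2 * m + 1) * 2 ^ c) ^ (2 * m + 1) :=
        Nat.pow_le_pow_left hγ _
    _ = (2 * m + 1) ^ (2 * m + 1) * 2 ^ (c * (2 * m + 1)) := by rw [mul_pow, ← pow_mul]
    _ < _ := Nat.mul_lt_mul_of_pos_left
        (Nat.pow_lt_pow_right one_lt_two (mul_two_mul_add_one_lt hdm)) (by positivity)

theorem bound_eq_mul_two_rpow {m : ℕ} (hd : d ≠ 0) (hm : 2 ^ (d - 1) = m + 1) (x : ℝ) :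
    ((2 : ℝ) ^ d - 1) * 2 ^ ((2 : ℝ) ^ (d - 1) - 3 / 2 + 1 / (2 * ((2 : ℝ) ^ d - 1))) *
        2 ^ ((1 / 2 - 1 / (2 * ((2 : ℝ) ^ d - 1))) * x) =
      ((2 * m + 1 : ℕ) : ℝ) * 2 ^ (m * (2 * m + x) / ((2 * m + 1 : ℕ) : ℝ)) := by
  have hmR : (2 : ℝ) ^ (d - 1) = m + 1 := by exact_mod_cast hm
  have hdR : (2 : ℝ) ^ d = 2 * m + 2 := by
    rw [← Nat.sub_add_cancel (Nat.one_le_iff_ne_zero.2 hd), pow_succ, hmR]; ring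
  rw [hmR, hdR, mul_assoc, ← Real.rpow_add zero_lt_two]
  push_cast
  rw [show (2 : ℝ) * m + 2 - 1 = 2 * m + 1 by ring]
  congr 2
  field_simp
  ring

end Kakeya

theorem gamma_upper (r d : ℕ) (hd : 3 ≤ d) (hr : d ≤ r) :
    ((gamma r d : ℝ) <
      ((2 : ℝ) ^ d - 1) *
        2 ^ ((2 : ℝ) ^ (d - 1) - 3 / 2 + 1 / (2 * ((2 : ℝ) ^ d - 1))) *
        2 ^ ((1 / 2 - 1 / (2 * ((2 : ℝ) ^ d - 1))) * (r : ℝ))) ∧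
    ∃ K : ℝ, 0 < K ∧ ∀ r' : ℕ, 3 ≤ r' →
      (gamma r' 3 : ℝ) ≤ K * 2 ^ ((3 * (r' : ℝ)) / 7) := by
  obtain ⟨m, hm⟩ : ∃ m, 2 ^ (d - 1) = m + 1 :=
    ⟨_, (Nat.sub_add_cancel Nat.one_le_two_pow).symm⟩
  have hpow : gamma r d ^ (2 * m + 1) < (2 * m + 1) ^ (2 * m + 1) * 2 ^ (m * (2 * m + r)) := by
    rcases (by omega : d = 3 ∨ 4 ≤ d) with rfl | hd4
    · obtain rfl : m = 3 := by norm_num at hm; omega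
      exact Kakeya.gamma_three_pow_lt hr
    · exact Kakeya.gamma_pow_lt_of_four_le hd4 hm hr
  refine ⟨?_, 7 * 2 ^ ((18 : ℝ) / 7), by positivity, fun r' hr' => ?_⟩
  · rw [Kakeya.bound_eq_mul_two_rpow (by omega) hm]
    exact_mod_cast lt_mul_two_rpow_of_pow_lt (by omega) hpow
  · have := lt_mul_two_rpow_of_pow_lt (by norm_num) (Kakeya.gamma_three_pow_lt hr')
    rw [mul_assoc, ← Real.rpow_add two_pos]
    push_cast at this
    exact this.le.trans_eq (by congr 2; ring)
end

section
/- Let 2 ≤ d ≤ r/2 and let ρ be the remainder of r upon division by 2d. Then β_r(d) ≥ Σ_{i+j=d, 0≤i≤2d−ρ, 0≤j≤ρ} C(2d−ρ, i)·C(ρ, j)·⌊r/(2d)⌋^i·(⌊r/(2d)⌋+1)^j. In particular β_r(d) ≥ C(2d, d)·⌊r/(2d)⌋^d. -/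
/-!
Split the coordinates into `2d` blocks and let `B` consist of the weight-`d` vectors meeting every
block at most once. Given `v` with support `U`, a codimension-`d` flat `v + L` avoiding `B \ {v}`
is cut out by `d` linear conditions:
* if two coordinates of `U` lie in one block, pin them to their value `1` in `v`
  (every point of the flat then meets that block twice);
* if `v ∈ B`, pin all of `U` (a point of `B` containing `U` is `v`);
* otherwise `U` meets at least `d + 1` or at most `d - 1` blocks, so there are `d + 1` blocks
  that `U` meets all or misses all. Asking the block parities of `x` to agree on them makes every
  point of the flat meet all or none of these blocks, while a point of `B` meets exactly `d`
  of the `2d` blocks.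
A choice of at most one coordinate in each block is a partial section `κ → Option ι`, and summing
`X ^ (number of occupied blocks)` over them gives `∏ₖ (1 + nₖ X)`, `nₖ` the block sizes; so `|B|`
is the coefficient of `X ^ d`. For the residue classes mod `2d` the product is
`(1 + qX) ^ (2d - ρ) (1 + (q + 1) X) ^ ρ`, and Vandermonde's identity compares the coefficient
with `C(2d, d) q ^ d`.
-/

open Finset Module Polynomial

section LinearAlgebra

variable {K V W : Type*} [DivisionRing K] [AddCommGroup V] [Module K V] [AddCommGroup W]
  [Module K W]

theorem Submodule.exists_le_finrank_eq (L : Submodule K V) {m : ℕ} (hm : m ≤ finrank K L) :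
    ∃ L' ≤ L, finrank K L' = m := by
  obtain ⟨f, hf⟩ := exists_linearIndependent_of_le_finrank hm
  refine ⟨Submodule.span K (Set.range (L.subtype ∘ f)), ?_, ?_⟩
  · rw [Submodule.span_le]
    rintro _ ⟨i, rfl⟩
    exact (f i).2
  · rw [finrank_span_eq_card (hf.map' _ L.ker_subtype), Fintype.card_fin]

theorem LinearMap.finrank_sub_finrank_le_finrank_ker [FiniteDimensional K V]
    [FiniteDimensional K W] (f : V →ₗ[K] W) :
    finrank K V - finrank K W ≤ finrank K (LinearMap.ker f) := by
  have := f.finrank_range_add_finrank_ker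
  have := f.range.finrank_le
  omega

end LinearAlgebra

section Flats

variable {K V : Type*} [Semiring K] [AddCommMonoid V] [Module K V]

def FlatAvoids (B : Set V) (v : V) (L : Submodule K V) : Prop :=
  ∀ x ∈ L, x ≠ 0 → v + x ∉ B

theorem FlatAvoids.mono {B : Set V} {v : V} {L L' : Submodule K V} (h : FlatAvoids B v L)
    (hL : L' ≤ L) : FlatAvoids B v L' :=
  fun x hx => h x (hL hx)

end Flats

theorem ZMod.two_indicator_support {ι : Type*} [Fintype ι] (v : ι → ZMod 2) :
    (({i | v i ≠ 0} : Finset ι) : Set ι).indicator 1 = v := by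
  have h01 : ∀ a : ZMod 2, a ≠ 0 → a = 1 := by decide
  funext i
  by_cases hi : v i = 0 <;> simp [Set.indicator_apply, hi, h01]

section HalfSize

variable {κ : Type*} [Fintype κ] [DecidableEq κ] {d : ℕ}

theorem Finset.exists_card_eq_succ_subset_or_disjoint (hκ : Fintype.card κ = 2 * d)
    {O : Finset κ} (hO : #O ≠ d) :
    ∃ T : Finset κ, #T = d + 1 ∧ (T ⊆ O ∨ Disjoint T O) := by
  rcases Nat.lt_or_gt_of_ne hO with hlt | hgt
  · obtain ⟨T, hTO, hT⟩ := exists_subset_card_eq (s := Oᶜ) (n := d + 1)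
      (by rw [card_compl]; omega)
    exact ⟨T, hT, .inr (subset_compl_iff_disjoint_right.1 hTO)⟩
  · obtain ⟨T, hTO, hT⟩ := exists_subset_card_eq (s := O) (n := d + 1) hgt
    exact ⟨T, hT, .inl hTO⟩

theorem Finset.not_subset_or_disjoint_of_card_eq (hκ : Fintype.card κ = 2 * d)
    {T O : Finset κ} (hT : #T = d + 1) (hO : #O = d) : ¬ (T ⊆ O ∨ Disjoint T O) := by
  rintro (hTO | hTO)
  · have := card_le_card hTO
    omega
  · have := card_union_of_disjoint hTO ▸ card_le_univ (T ∪ O)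
    omega

end HalfSize

section Blocks

variable {ι κ : Type*} [Fintype ι] [DecidableEq κ] (blk : ι → κ)

def blockTransversals (d : ℕ) : Finset (Finset ι) :=
  {S | #S = d ∧ Set.InjOn blk S}

noncomputable def transversalVectors (d : ℕ) : Finset (ι → ZMod 2) :=
  (blockTransversals blk d).image fun S : Finset ι => (S : Set ι).indicator 1

def blockSum (R : Type*) [CommSemiring R] : (ι → R) →ₗ[R] (κ → R) where
  toFun x k := ∑ i with blk i = k, x i
  map_add' x y := by ext k; simp [sum_add_distrib]
  map_smul' a x := by ext k; simp [mul_sum]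

variable {blk}

theorem blockSum_apply {R : Type*} [CommSemiring R] (x : ι → R) (k : κ) :
    blockSum blk R x k = ∑ i with blk i = k, x i := rfl

theorem blockSum_indicator_one {R : Type*} [CommSemiring R] {S : Finset ι}
    (hS : Set.InjOn blk S) :
    blockSum blk R ((S : Set ι).indicator 1) = (S.image blk : Set κ).indicator 1 := by
  ext k
  rw [blockSum_apply]
  by_cases hk : k ∈ S.image blk
  · obtain ⟨i₀, hi₀, rfl⟩ := mem_image.1 hk
    rw [Set.indicator_of_mem (mem_coe.2 hk), sum_eq_single_of_mem i₀ (by simp) fun i hi hne => ?_]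
    · simp [hi₀]
    · exact Set.indicator_of_notMem (fun hiS => hne (hS hiS hi₀ (mem_filter.1 hi).2)) _
  · rw [Set.indicator_of_notMem (mem_coe.not.2 hk)]
    refine sum_eq_zero fun i hi => Set.indicator_of_notMem (fun hiS => hk ?_) _
    exact mem_image.2 ⟨i, hiS, (mem_filter.1 hi).2⟩

theorem mem_transversalVectors {d : ℕ} {w : ι → ZMod 2} :
    w ∈ transversalVectors blk d ↔
      ∃ S : Finset ι, #S = d ∧ Set.InjOn blk S ∧ (S : Set ι).indicator 1 = w := by
  simp [transversalVectors, blockTransversals, and_assoc]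

theorem exists_submodule_vanishing_on (K : Type*) [Field K] (P : Finset ι) :
    ∃ L : Submodule K (ι → K), Fintype.card ι - #P ≤ finrank K L ∧ ∀ x ∈ L, ∀ i ∈ P, x i = 0 := by
  let f := LinearMap.funLeft K K ((↑) : P → ι)
  exact ⟨LinearMap.ker f, by simpa using f.finrank_sub_finrank_le_finrank_ker,
    fun x hx i hi => congrFun (LinearMap.mem_ker.1 hx) ⟨i, hi⟩⟩

variable (blk) in
theorem exists_submodule_blockSum_eq (K : Type*) [Field K] {T : Finset κ} {k₀ : κ}
    (hk₀ : k₀ ∈ T) :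
    ∃ L : Submodule K (ι → K), Fintype.card ι - (#T - 1) ≤ finrank K L ∧
      ∀ x ∈ L, ∀ k ∈ T, blockSum blk K x k = blockSum blk K x k₀ := by
  let f : (ι → K) →ₗ[K] (T.erase k₀ → K) := LinearMap.pi fun k =>
    (LinearMap.proj (R := K) (φ := fun _ : κ => K) (k : κ) - LinearMap.proj k₀) ∘ₗ blockSum blk K
  refine ⟨LinearMap.ker f, ?_, fun x hx k hk => ?_⟩
  · simpa only [finrank_fintype_fun_eq_card, Fintype.card_coe, card_erase_of_mem hk₀] using
      f.finrank_sub_finrank_le_finrank_ker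
  by_cases hk' : k = k₀
  · rw [hk']
  simpa [f, sub_eq_zero] using congrFun (LinearMap.mem_ker.1 hx) ⟨k, mem_erase.2 ⟨hk', hk⟩⟩

theorem flatAvoids_of_pinned {d : ℕ} {U P : Finset ι} (hPU : P ⊆ U)
    (hP : ∀ S : Finset ι, #S = d → Set.InjOn blk S → P ⊆ S → S = U)
    {L : Submodule (ZMod 2) (ι → ZMod 2)} (hL : ∀ x ∈ L, ∀ i ∈ P, x i = 0) :
    FlatAvoids (transversalVectors blk d : Set (ι → ZMod 2)) ((U : Set ι).indicator 1) L := by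
  intro x hx hx0 hmem
  obtain ⟨S, hSd, hS, hSx⟩ := mem_transversalVectors.1 (mem_coe.1 hmem)
  have hPS : P ⊆ S := fun i hi => by
    rw [← mem_coe, ← Set.indicator_eq_one_iff_mem (ZMod 2), hSx, Pi.add_apply, hL x hx i hi,
      add_zero, Set.indicator_of_mem (mem_coe.2 (hPU hi)), Pi.one_apply]
  rw [hP S hSd hS hPS, left_eq_add] at hSx
  exact hx0 hSx

theorem flatAvoids_of_blockSum_const [Fintype κ] {d : ℕ} (hκ : Fintype.card κ = 2 * d)
    {U : Finset ι} (hU : Set.InjOn blk U) {T : Finset κ} (hT : #T = d + 1)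
    (hTU : T ⊆ U.image blk ∨ Disjoint T (U.image blk)) {k₀ : κ} (hk₀ : k₀ ∈ T)
    {L : Submodule (ZMod 2) (ι → ZMod 2)}
    (hL : ∀ x ∈ L, ∀ k ∈ T, blockSum blk (ZMod 2) x k = blockSum blk (ZMod 2) x k₀) :
    FlatAvoids (transversalVectors blk d : Set (ι → ZMod 2)) ((U : Set ι).indicator 1) L := by
  intro x hx _ hmem
  obtain ⟨S, hSd, hS, hSx⟩ := mem_transversalVectors.1 (mem_coe.1 hmem)
  have hU_const : ∀ k ∈ T, (k ∈ U.image blk ↔ k₀ ∈ U.image blk) := by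
    intro k hk
    rcases hTU with hTU | hTU
    · exact iff_of_true (hTU hk) (hTU hk₀)
    · exact iff_of_false (disjoint_left.1 hTU hk) (disjoint_left.1 hTU hk₀)
  have hsum := congrArg (blockSum blk (ZMod 2)) hSx
  rw [map_add, blockSum_indicator_one hS, blockSum_indicator_one hU] at hsum
  have hS_const : ∀ k ∈ T, (k ∈ S.image blk ↔ k₀ ∈ S.image blk) := by
    intro k hk
    rw [← mem_coe, ← Set.indicator_eq_one_iff_mem (ZMod 2), congrFun hsum k, Pi.add_apply,
      hL x hx k hk, ← mem_coe, ← Set.indicator_eq_one_iff_mem (ZMod 2), congrFun hsum k₀,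
      Pi.add_apply]
    simp only [Set.indicator_apply, mem_coe, Pi.one_apply, hU_const k hk]
  refine not_subset_or_disjoint_of_card_eq hκ hT ((card_image_of_injOn hS).trans hSd) ?_
  by_cases h₀ : k₀ ∈ S.image blk
  · exact .inl fun k hk => (hS_const k hk).2 h₀
  · exact .inr (disjoint_left.2 fun k hk => (hS_const k hk).not.2 h₀)

variable (blk)

theorem exists_flatAvoids_transversalVectors [Fintype κ] [DecidableEq ι] {d : ℕ}
    (hκ : Fintype.card κ = 2 * d) (hd : 2 ≤ d) (v : ι → ZMod 2) :
    ∃ L : Submodule (ZMod 2) (ι → ZMod 2), Fintype.card ι - d ≤ finrank (ZMod 2) L ∧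
      FlatAvoids (transversalVectors blk d : Set (ι → ZMod 2)) v L := by
  set U : Finset ι := {i | v i ≠ 0}
  rw [← ZMod.two_indicator_support v]
  by_cases hU : Set.InjOn blk U
  · by_cases hUd : #U = d
    · obtain ⟨L, hL, hLU⟩ := exists_submodule_vanishing_on (ZMod 2) U
      refine ⟨L, hUd ▸ hL, flatAvoids_of_pinned subset_rfl (fun S hSd _ hUS => ?_) hLU⟩
      exact (eq_of_subset_of_card_le hUS (hSd.trans hUd.symm).le).symm
    obtain ⟨T, hT, hTU⟩ :=
      exists_card_eq_succ_subset_or_disjoint hκ ((card_image_of_injOn hU).trans_ne hUd)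
    obtain ⟨k₀, hk₀⟩ : T.Nonempty := card_pos.1 (by omega)
    obtain ⟨L, hL, hLT⟩ := exists_submodule_blockSum_eq blk (ZMod 2) hk₀
    exact ⟨L, by simpa [hT] using hL, flatAvoids_of_blockSum_const hκ hU hT hTU hk₀ hLT⟩
  · obtain ⟨i₁, hi₁, i₂, hi₂, hblk, hne⟩ :
        ∃ i₁ ∈ U, ∃ i₂ ∈ U, blk i₁ = blk i₂ ∧ i₁ ≠ i₂ := by
      simpa [Set.InjOn] using hU
    obtain ⟨L, hL, hLP⟩ := exists_submodule_vanishing_on (ZMod 2) {i₁, i₂}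
    refine ⟨L, le_trans ?_ hL, flatAvoids_of_pinned (U := U) ?_ (fun S _ hS hPS => ?_) hLP⟩
    · rw [card_pair hne]
      omega
    · simp [insert_subset_iff, hi₁, hi₂]
    · exact absurd (hS (hPS (by simp)) (hPS (by simp)) hblk) hne

end Blocks

section ChosenCoords

variable {ι κ : Type*} [Fintype ι] [DecidableEq ι]

def chosenCoords (blk : ι → κ) (c : κ → Option ι) : Finset ι := {i | c (blk i) = some i}

theorem injOn_blk_chosenCoords {blk : ι → κ} (c : κ → Option ι) :
    Set.InjOn blk (chosenCoords blk c) := by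
  intro i hi j hj hij
  simp only [chosenCoords, coe_filter, mem_univ, true_and, Set.mem_ofPred_eq] at hi hj
  exact Option.some_injective _ (hi.symm.trans (hij ▸ hj))

end ChosenCoords

section Counting

variable {ι κ : Type*} [Fintype ι] [Fintype κ] [DecidableEq κ] (blk : ι → κ)

/-- `c k = some i` chooses the coordinate `i` in block `k`; `c k = none` leaves block `k` empty. -/
def partialSections : Finset (κ → Option ι) :=
  Fintype.piFinset fun k => insertNone {i | blk i = k}

def occupiedBlocks (c : κ → Option ι) : Finset κ := {k | (c k).isSome}

theorem sum_partialSections_X_pow :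
    ∑ c ∈ partialSections blk, (X : ℕ[X]) ^ #(occupiedBlocks c) =
      ∏ k, (1 + C #{i | blk i = k} * X) := by
  have hblock (k : κ) :
      ∑ o ∈ insertNone {i | blk i = k}, (X : ℕ[X]) ^ (if o.isSome then 1 else 0) =
        1 + C #{i | blk i = k} * X := by
    simp [sum_insertNone]
  simp_rw [← hblock, prod_univ_sum, prod_pow_eq_pow_sum, ← card_filter]
  rfl

theorem card_filter_partialSections (d : ℕ) :
    #{c ∈ partialSections blk | #(occupiedBlocks c) = d} =
      (∏ k, (1 + C #{i | blk i = k} * X)).coeff d := by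
  rw [← sum_partialSections_X_pow, finsetSum_coeff, card_filter]
  simp [coeff_X_pow, eq_comm]

variable {blk}

theorem mem_partialSections {c : κ → Option ι} :
    c ∈ partialSections blk ↔ ∀ k i, c k = some i → blk i = k := by
  simp [partialSections, mem_insertNone]

variable [DecidableEq ι]

theorem some_eq_iff_mem_chosenCoords {c : κ → Option ι} (hc : c ∈ partialSections blk) {k : κ}
    {i : ι} : c k = some i ↔ blk i = k ∧ i ∈ chosenCoords blk c := by
  simp only [chosenCoords, mem_filter, mem_univ, true_and]
  constructor
  · intro h
    obtain rfl := mem_partialSections.1 hc k i h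
    exact ⟨rfl, h⟩
  · rintro ⟨rfl, h⟩
    exact h

theorem injOn_chosenCoords : Set.InjOn (chosenCoords blk) (partialSections blk) := by
  intro c hc c' hc' h
  funext k
  refine Option.ext fun i => ?_
  rw [some_eq_iff_mem_chosenCoords hc, some_eq_iff_mem_chosenCoords hc', h]

theorem image_chosenCoords {c : κ → Option ι} (hc : c ∈ partialSections blk) :
    (chosenCoords blk c).image blk = occupiedBlocks c := by
  ext k
  rw [occupiedBlocks, mem_filter, mem_image, Option.isSome_iff_exists]
  simp only [mem_univ, true_and]
  constructor
  · rintro ⟨i, hi, rfl⟩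
    exact ⟨i, (some_eq_iff_mem_chosenCoords hc).2 ⟨rfl, hi⟩⟩
  · rintro ⟨i, hi⟩
    obtain ⟨rfl, hmem⟩ := (some_eq_iff_mem_chosenCoords hc).1 hi
    exact ⟨i, hmem, rfl⟩

theorem card_filter_partialSections_le_card_transversalVectors (d : ℕ) :
    #{c ∈ partialSections blk | #(occupiedBlocks c) = d} ≤ #(transversalVectors blk d) := by
  rw [transversalVectors, card_image_of_injective _ fun S S' h => by
    exact_mod_cast Set.indicator_one_inj (ZMod 2) h]
  refine card_le_card_of_injOn (chosenCoords blk) (fun c hc => ?_)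
    (injOn_chosenCoords.mono fun c hc => (mem_filter.1 hc).1)
  obtain ⟨hc, hd⟩ := mem_filter.1 hc
  simp only [blockTransversals, coe_filter, mem_univ, true_and, Set.mem_ofPred_eq]
  refine ⟨?_, injOn_blk_chosenCoords c⟩
  rw [← hd, ← image_chosenCoords hc, card_image_of_injOn (injOn_blk_chosenCoords c)]

end Counting

theorem card_filter_finOfNat_eq {r n : ℕ} [NeZero n] (k : Fin n) :
    #{i : Fin r | Fin.ofNat n i = k} = r / n + if (k : ℕ) < r % n then 1 else 0 := by
  have hk : (k : ℕ) % n = k := Nat.mod_eq_of_lt k.2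
  rw [← hk, ← Nat.count_modEq_card r (Nat.pos_of_neZero n), Nat.count_eq_card_filter_range,
    ← card_map Fin.valEmbedding]
  congr 1
  ext x
  simp only [mem_map, mem_filter, mem_univ, true_and, Fin.ext_iff, Fin.val_ofNat, mem_range,
    Nat.ModEq, hk, Fin.valEmbedding_apply]
  exact ⟨fun ⟨i, hi, hix⟩ => hix ▸ ⟨i.2, hi⟩, fun ⟨hx, hxk⟩ => ⟨⟨x, hx⟩, hxk, rfl⟩⟩

theorem prod_one_add_card_finOfNat_mul_X (r n : ℕ) [NeZero n] :
    ∏ k : Fin n, (1 + C #{i : Fin r | Fin.ofNat n i = k} * X) =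
      (1 + C (r / n) * X) ^ (n - r % n) * (1 + C (r / n + 1) * X) ^ (r % n) := by
  have hsplit (k : Fin n) : 1 + C #{i : Fin r | Fin.ofNat n i = k} * X =
      if (k : ℕ) < r % n then 1 + C (r / n + 1) * X else 1 + C (r / n) * X := by
    rw [card_filter_finOfNat_eq]
    split_ifs <;> rfl
  have hlt : #{k : Fin n | (k : ℕ) < r % n} = r % n := by
    rw [Fin.card_filter_val_lt, min_eq_right (Nat.mod_lt _ (Nat.pos_of_neZero n)).le]
  rw [prod_congr rfl fun k _ => hsplit k, prod_ite, prod_const, prod_const, hlt, filter_not,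
    card_sdiff_of_subset (filter_subset _ _), hlt, card_univ, Fintype.card_fin, mul_comm]

theorem coeff_one_add_C_mul_X_pow {R : Type*} [CommSemiring R] (a : R) (n i : ℕ) :
    ((1 + C a * X) ^ n).coeff i = n.choose i * a ^ i := by
  rw [add_comm, add_pow, finsetSum_coeff]
  simp only [mul_pow, one_pow, mul_one, ← C_pow, ← C_eq_natCast, coeff_mul_C, coeff_C_mul,
    coeff_X_pow, mul_ite, ite_mul, zero_mul, mul_zero, sum_ite_eq, mem_range, Nat.lt_succ_iff]
  split_ifs with h
  · ring
  · simp [Nat.choose_eq_zero_of_lt (not_le.1 h)]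

theorem coeff_prod_one_add_card_finOfNat_mul_X (r n m : ℕ) [NeZero n] :
    (∏ k : Fin n, (1 + C #{i : Fin r | Fin.ofNat n i = k} * X)).coeff m =
      ∑ p ∈ antidiagonal m,
        (n - r % n).choose p.1 * (r % n).choose p.2 * (r / n) ^ p.1 * (r / n + 1) ^ p.2 := by
  rw [prod_one_add_card_finOfNat_mul_X, coeff_mul]
  refine sum_congr rfl fun p _ => ?_
  rw [coeff_one_add_C_mul_X_pow, coeff_one_add_C_mul_X_pow]
  push_cast
  ring

theorem choose_add_mul_pow_le_sum (m n d q : ℕ) :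
    (m + n).choose d * q ^ d ≤
      ∑ p ∈ antidiagonal d, m.choose p.1 * n.choose p.2 * q ^ p.1 * (q + 1) ^ p.2 := by
  rw [Nat.add_choose_eq, sum_mul]
  refine sum_le_sum fun p hp => ?_
  rw [← mem_antidiagonal.1 hp, pow_add, ← mul_assoc]
  gcongr
  omega

theorem kakeyaNonBlocking_transversalVectors {r d : ℕ} {κ : Type*} [Fintype κ] [DecidableEq κ]
    (blk : Fin r → κ) (hκ : Fintype.card κ = 2 * d) (hd : 2 ≤ d) :
    KakeyaNonBlocking r d (transversalVectors blk d) := by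
  intro v
  obtain ⟨L, hL, hv⟩ := exists_flatAvoids_transversalVectors blk hκ hd v
  obtain ⟨L', hL', hrank⟩ := L.exists_le_finrank_eq (m := r - d) (by simpa using hL)
  exact ⟨L', hrank, hv.mono hL'⟩

theorem card_le_beta {r d : ℕ} {B : Finset (Fin r → ZMod 2)} (hB : KakeyaNonBlocking r d B) :
    #B ≤ beta r d :=
  le_csSup ⟨Fintype.card (Fin r → ZMod 2), by rintro _ ⟨C, rfl, -⟩; exact card_le_univ C⟩
    ⟨B, rfl, hB⟩

theorem beta_lower_general (r d : ℕ) (hd : 2 ≤ d) :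
    (∑ p ∈ Finset.HasAntidiagonal.antidiagonal d,
        (2 * d - r % (2 * d)).choose p.1 * (r % (2 * d)).choose p.2 *
          (r / (2 * d)) ^ p.1 * (r / (2 * d) + 1) ^ p.2) ≤ beta r d ∧
    (2 * d).choose d * (r / (2 * d)) ^ d ≤ beta r d := by
  have : NeZero (2 * d) := ⟨by omega⟩
  let blk : Fin r → Fin (2 * d) := fun i => Fin.ofNat (2 * d) i
  have hsum_le : (∑ p ∈ antidiagonal d,
      (2 * d - r % (2 * d)).choose p.1 * (r % (2 * d)).choose p.2 *
        (r / (2 * d)) ^ p.1 * (r / (2 * d) + 1) ^ p.2) ≤ beta r d := by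
    rw [← coeff_prod_one_add_card_finOfNat_mul_X, ← card_filter_partialSections blk]
    exact (card_filter_partialSections_le_card_transversalVectors d).trans
      (card_le_beta (kakeyaNonBlocking_transversalVectors blk (Fintype.card_fin _) hd))
  refine ⟨hsum_le, le_trans ?_ hsum_le⟩
  have hρ : 2 * d = (2 * d - r % (2 * d)) + r % (2 * d) :=
    (Nat.sub_add_cancel (Nat.mod_lt _ (by omega)).le).symm
  simpa only [← hρ] using
    choose_add_mul_pow_le_sum (2 * d - r % (2 * d)) (r % (2 * d)) d (r / (2 * d))

theorem beta_lower (r d : ℕ) (hd : 2 ≤ d) (hdr : 2 * d ≤ r) :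
    (∑ p ∈ Finset.HasAntidiagonal.antidiagonal d,
        (2 * d - r % (2 * d)).choose p.1 * (r % (2 * d)).choose p.2 *
          (r / (2 * d)) ^ p.1 * (r / (2 * d) + 1) ^ p.2) ≤ beta r d ∧
    (2 * d).choose d * (r / (2 * d)) ^ d ≤ beta r d :=
  beta_lower_general r d hd
end

section
/- Suppose r ≥ d ≥ 1, k ≥ 1, and rᵢ ≥ dᵢ ≥ 0 (i = 1,…,k) are integers with r₁+…+r_k ≤ r, d₁+…+d_k ≤ d, and rᵢ ≤ d + dᵢ for each i. Then β_r(d) ≥ C(r₁,d₁)·…·C(r_k,d_k). -/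
namespace KKX
open Finset Submodule

variable {r : ℕ}

def indic (P : Finset (Fin r)) : Fin r → ZMod 2 := fun j => if j ∈ P then 1 else 0

noncomputable def wt (S : Finset (Fin r)) (y : Fin r → ZMod 2) : ℕ :=
  (S.filter (fun j => y j = 1)).card

lemma z2 (x : ZMod 2) : x = 0 ∨ x = 1 := by revert x; decide
lemma z2ne (x : ZMod 2) : ¬ x = 1 ↔ x = 0 := by revert x; decide
lemma z2add (x : ZMod 2) : x + x = 0 := by revert x; decide

lemma wt_le (S : Finset (Fin r)) (y) : wt S y ≤ S.card := Finset.card_filter_le _ _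

lemma wt_congr {S : Finset (Fin r)} {y z} (h : ∀ j ∈ S, y j = z j) : wt S y = wt S z := by
  unfold wt
  congr 1
  exact Finset.filter_congr (fun j hj => by rw [h j hj])

lemma wt_eq_zero {S : Finset (Fin r)} {y} (h : ∀ j ∈ S, y j = 0) : wt S y = 0 := by
  unfold wt
  rw [Finset.card_eq_zero, Finset.filter_eq_empty_iff]
  intro j hj
  rw [h j hj]
  decide

lemma indic_mem {P : Finset (Fin r)} {j} (h : j ∈ P) : indic P j = 1 := if_pos h
lemma indic_notMem {P : Finset (Fin r)} {j} (h : j ∉ P) : indic P j = 0 := if_neg h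

lemma wt_flip (U : Finset (Fin r)) (y : Fin r → ZMod 2) :
    wt U (fun j => y j + 1) = U.card - wt U y := by
  unfold wt
  rw [← Finset.card_sdiff_of_subset (Finset.filter_subset _ _)]
  congr 1
  ext j
  simp only [Finset.mem_filter, Finset.mem_sdiff]
  constructor
  · rintro ⟨hj, h1⟩
    refine ⟨hj, fun hc => ?_⟩
    have := hc.2
    rw [this] at h1
    exact absurd h1 (by decide)
  · rintro ⟨hj, hc⟩
    refine ⟨hj, ?_⟩
    have : ¬ (y j = 1) := fun h => hc ⟨hj, h⟩
    rw [(z2ne _).1 this]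
    decide

lemma wt_union {U V : Finset (Fin r)} (h : Disjoint U V) (y) :
    wt (U ∪ V) y = wt U y + wt V y := by
  unfold wt
  rw [Finset.filter_union]
  exact Finset.card_union_of_disjoint (Finset.disjoint_filter_filter h)

lemma wt_add_indic {S U : Finset (Fin r)} (hUS : U ⊆ S) (y : Fin r → ZMod 2) :
    wt S (y + indic U) + wt U y + wt U y = wt S y + U.card := by
  have hsplit : S = U ∪ (S \ U) := (Finset.union_sdiff_of_subset hUS).symm
  have hdisj : Disjoint U (S \ U) := Finset.disjoint_sdiff
  have h1 : wt S (y + indic U) = wt U (y + indic U) + wt (S \ U) (y + indic U) := by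
    conv_lhs => rw [hsplit]
    exact wt_union hdisj _
  have h2 : wt (S \ U) (y + indic U) = wt (S \ U) y := by
    apply wt_congr
    intro j hj
    have : j ∉ U := (Finset.mem_sdiff.1 hj).2
    simp [indic_notMem this]
  have h3 : wt U (y + indic U) = U.card - wt U y := by
    rw [wt_congr (z := fun j => y j + 1) (fun j hj => by simp [indic_mem hj])]
    exact wt_flip U y
  have h4 : wt S y = wt U y + wt (S \ U) y := by
    conv_lhs => rw [hsplit]
    exact wt_union hdisj _
  have h5 := wt_le U y
  omega

lemma wt_biUnion {ι : Type*} [DecidableEq ι] {A : Finset ι} {D : ι → Finset (Fin r)}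
    (h : ∀ a ∈ A, ∀ b ∈ A, a ≠ b → Disjoint (D a) (D b)) (y) :
    wt (A.biUnion D) y = ∑ a ∈ A, wt (D a) y := by
  unfold wt
  rw [Finset.filter_biUnion]
  exact Finset.card_biUnion (fun a ha b hb hab =>
    Finset.disjoint_filter_filter (h a ha b hb hab))

lemma indic_biUnion {ι : Type*} [DecidableEq ι] (A : Finset ι) (D : ι → Finset (Fin r))
    (h : ∀ a ∈ A, ∀ b ∈ A, a ≠ b → Disjoint (D a) (D b)) :
    ∑ a ∈ A, indic (D a) = indic (A.biUnion D) := by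
  induction A using Finset.induction_on with
  | empty => funext j; simp [indic]
  | @insert a A' ha ih =>
    rw [Finset.sum_insert ha, Finset.biUnion_insert,
      ih (fun x hx y hy => h x (Finset.mem_insert_of_mem hx) y (Finset.mem_insert_of_mem hy))]
    funext j
    by_cases hj : j ∈ D a
    · have hj2 : j ∉ A'.biUnion D := by
        intro hc
        obtain ⟨b, hb, hjb⟩ := Finset.mem_biUnion.1 hc
        have hab : a ≠ b := fun he => ha (he ▸ hb)
        exact (Finset.disjoint_left.1
          (h a (Finset.mem_insert_self _ _) b (Finset.mem_insert_of_mem hb) hab)) hj hjb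
      simp [indic, hj, hj2, Pi.add_apply]
    · by_cases hj3 : j ∈ A'.biUnion D <;>
        simp [indic, hj, hj3, Pi.add_apply]


lemma span_family {ι : Type*} [Fintype ι] [DecidableEq ι] (D : ι → Finset (Fin r))
    (hne : ∀ a, (D a).Nonempty)
    (hdis : ∀ a b : ι, a ≠ b → Disjoint (D a) (D b)) :
    Module.finrank (ZMod 2) (span (ZMod 2) (Set.range fun a => indic (D a))) = Fintype.card ι ∧
    ∀ x ∈ span (ZMod 2) (Set.range fun a => indic (D a)),
      ∃ A : Finset ι, x = indic (A.biUnion D) := by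
  have hli : LinearIndependent (ZMod 2) (fun a => indic (D a)) := by
    rw [Fintype.linearIndependent_iff]
    intro g hg a
    by_contra hga
    have hga1 : g a = 1 := by
      rcases (show g a = 0 ∨ g a = 1 by generalize g a = x; revert x; decide) with h | h
      · exact absurd h hga
      · exact h
    obtain ⟨j, hj⟩ := hne a
    have h0 := congrFun hg j
    rw [Finset.sum_apply] at h0
    have hsingle : ∑ b : ι, (g b • indic (D b)) j = (g a • indic (D a)) j := by
      apply Finset.sum_eq_single
      · intro b _ hba
        have : j ∉ D b := Finset.disjoint_left.1 (hdis a b (Ne.symm hba)) hj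
        simp [indic, this]
      · intro h; exact absurd (Finset.mem_univ a) h
    rw [hsingle] at h0
    simp only [Pi.smul_apply, hga1, indic, if_pos hj, smul_eq_mul, mul_one] at h0
    exact one_ne_zero h0
  refine ⟨finrank_span_eq_card hli, ?_⟩
  intro x hx
  rw [mem_span_range_iff_exists_fun] at hx
  obtain ⟨c, hc⟩ := hx
  refine ⟨Finset.univ.filter (fun a => c a = 1), ?_⟩
  rw [← indic_biUnion _ _ (fun a _ b _ hab => hdis a b hab), ← hc,
    ← Finset.sum_filter_add_sum_filter_not Finset.univ (fun a => c a = 1)]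
  have h1 : ∀ a ∈ Finset.univ.filter (fun a => c a = 1), c a • indic (D a) = indic (D a) := by
    intro a ha
    rw [(Finset.mem_filter.1 ha).2, one_smul]
  have h2 : ∑ a ∈ Finset.univ.filter (fun a => ¬ c a = 1), c a • indic (D a) = 0 := by
    apply Finset.sum_eq_zero
    intro a ha
    have : c a = 0 := by
      have := (Finset.mem_filter.1 ha).2
      generalize c a = x at *; revert x; decide
    rw [this, zero_smul]
  rw [Finset.sum_congr rfl h1, h2, add_zero]

lemma kill (S : Finset (Fin r)) (v : Fin r → ZMod 2) (t s : ℕ)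
    (hw : wt S v < t) (h1 : s ≤ t) (h2 : s + t ≤ S.card) :
    ∃ D : Fin s → Finset (Fin r), (∀ a, (D a).Nonempty) ∧ (∀ a, D a ⊆ S) ∧
      (∀ a b : Fin s, a ≠ b → Disjoint (D a) (D b)) ∧
      ∀ A : Finset (Fin s), wt S (v + indic (A.biUnion D)) ≠ t := by
  classical
  rcases Nat.eq_zero_or_pos s with hs0 | hs1
  · subst hs0
    refine ⟨fun a => a.elim0, fun a => a.elim0, fun a => a.elim0, fun a => a.elim0, ?_⟩
    intro A
    have hA : A = ∅ := Finset.eq_empty_of_forall_notMem (fun a => a.elim0)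
    subst hA
    simp only [Finset.biUnion_empty]
    have : indic (∅ : Finset (Fin r)) = 0 := by funext j; simp [indic]
    rw [this, add_zero]
    omega
  · set w := wt S v with hwdef
    set g := t - w with hgdef
    have hg1 : 1 ≤ g := by omega
    set q := min (s-1) (g-1) with hq
    set p := s - 1 - q with hp
    set W := S.filter (fun j => v j = 1) with hW
    set Z := S \ W with hZ
    have hWcard : W.card = w := rfl
    have hZcard : Z.card = S.card - w := by
      rw [hZ, Finset.card_sdiff_of_subset (Finset.filter_subset _ _), hWcard]
    have hzcard : q + (g+1) + p ≤ Z.card := by omega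
    have hpw : p ≤ W.card := by omega
    obtain ⟨Z', hZ'sub, hZ'card⟩ := Finset.exists_subset_card_eq hzcard
    obtain ⟨W', hW'sub, hW'card⟩ := Finset.exists_subset_card_eq hpw
    -- slot index type for Z'
    have hcardκ : Fintype.card (Fin q ⊕ Fin (g+1) ⊕ Fin p) = q + (g+1) + p := by
      simp; omega
    have eZ : (Fin q ⊕ Fin (g+1) ⊕ Fin p) ≃ {x // x ∈ Z'} := by
      apply Fintype.equivOfCardEq
      rw [hcardκ, Fintype.card_coe, hZ'card]
    have eW : Fin p ≃ {x // x ∈ W'} := by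
      apply Fintype.equivOfCardEq
      rw [Fintype.card_coe, hW'card, Fintype.card_fin]
    set fZ : (Fin q ⊕ Fin (g+1) ⊕ Fin p) → Fin r := fun z => (eZ z).val with hfZ
    set fW : Fin p → Fin r := fun c => (eW c).val with hfW
    have hfZinj : Function.Injective fZ := fun a b h => eZ.injective (Subtype.ext h)
    have hfWinj : Function.Injective fW := fun a b h => eW.injective (Subtype.ext h)
    have hfZZ : ∀ z, fZ z ∈ Z := fun z => hZ'sub (eZ z).2
    have hfWW : ∀ c, fW c ∈ W := fun c => hW'sub (eW c).2
    have hfZS : ∀ z, fZ z ∈ S := fun z => (Finset.mem_sdiff.1 (hfZZ z)).1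
    have hfWS : ∀ c, fW c ∈ S := fun c => (Finset.mem_filter.1 (hfWW c)).1
    have hvZ : ∀ z, v (fZ z) = 0 := by
      intro z
      have h' := Finset.mem_sdiff.1 (hfZZ z)
      have : ¬ v (fZ z) = 1 := fun hc => h'.2 (Finset.mem_filter.2 ⟨h'.1, hc⟩)
      generalize v (fZ z) = x at *; revert x; decide
    have hvW : ∀ c, v (fW c) = 1 := fun c => (Finset.mem_filter.1 (hfWW c)).2
    have hZW : ∀ z c, fZ z ≠ fW c := by
      intro z c hc
      have := hvZ z
      rw [hc, hvW c] at this
      exact absurd this (by decide)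
    -- gadgets
    set D0 : (Fin q ⊕ Unit ⊕ Fin p) → Finset (Fin r) := fun a =>
      match a with
      | Sum.inl b => {fZ (Sum.inl b)}
      | Sum.inr (Sum.inl _) => (Finset.univ : Finset (Fin (g+1))).image
          (fun c => fZ (Sum.inr (Sum.inl c)))
      | Sum.inr (Sum.inr c) => {fZ (Sum.inr (Sum.inr c)), fW c} with hD0
    have hD0ne : ∀ a, (D0 a).Nonempty := by
      rintro (b | u | c)
      · exact ⟨_, Finset.mem_singleton_self _⟩
      · exact ⟨fZ (Sum.inr (Sum.inl ⟨0, Nat.succ_pos g⟩)),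
          Finset.mem_image_of_mem _ (Finset.mem_univ _)⟩
      · exact ⟨_, Finset.mem_insert_self _ _⟩
    have hD0S : ∀ a, D0 a ⊆ S := by
      rintro (b | u | c) j hj <;> simp only [hD0, Finset.mem_singleton, Finset.mem_insert,
        Finset.mem_image] at hj
      · exact hj ▸ hfZS _
      · obtain ⟨c, _, rfl⟩ := hj; exact hfZS _
      · rcases hj with rfl | rfl
        · exact hfZS _
        · exact hfWS _
    have hmemD0 : ∀ (a : Fin q ⊕ Unit ⊕ Fin p) (j), j ∈ D0 a →
        (∃ z, j = fZ z ∧ (match a, z with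
          | Sum.inl b, Sum.inl b' => b = b'
          | Sum.inr (Sum.inl _), Sum.inr (Sum.inl _) => True
          | Sum.inr (Sum.inr c), Sum.inr (Sum.inr c') => c = c'
          | _, _ => False)) ∨
        (∃ c, j = fW c ∧ a = Sum.inr (Sum.inr c)) := by
      rintro (b | u | c) j hj <;> simp only [hD0, Finset.mem_singleton, Finset.mem_insert,
        Finset.mem_image] at hj
      · exact Or.inl ⟨Sum.inl b, hj, rfl⟩
      · obtain ⟨c, _, rfl⟩ := hj; exact Or.inl ⟨Sum.inr (Sum.inl c), rfl, trivial⟩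
      · rcases hj with rfl | rfl
        · exact Or.inl ⟨Sum.inr (Sum.inr c), rfl, rfl⟩
        · exact Or.inr ⟨c, rfl, rfl⟩
    have hD0disj : ∀ a b : (Fin q ⊕ Unit ⊕ Fin p), a ≠ b → Disjoint (D0 a) (D0 b) := by
      intro a b hab
      rw [Finset.disjoint_left]
      intro j hja hjb
      rcases hmemD0 a j hja with ⟨z1, he1, hz1⟩ | ⟨c1, he1, hc1⟩ <;>
        rcases hmemD0 b j hjb with ⟨z2, he2, hz2⟩ | ⟨c2, he2, hc2⟩
      · have hzz := hfZinj (he1.symm.trans he2)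
        subst hzz
        rcases z1 with x | x | x <;> rcases a with a1 | ⟨⟨⟩⟩ | a3 <;>
          rcases b with b1 | ⟨⟨⟩⟩ | b3 <;>
          first
          | exact (show False from hz1).elim
          | exact (show False from hz2).elim
          | exact hab rfl
          | exact hab (by rw [show a1 = x from hz1, show b1 = x from hz2])
          | exact hab (by rw [show a3 = x from hz1, show b3 = x from hz2])
      · exact hZW z1 c2 (he1.symm.trans he2)
      · exact hZW z2 c1 (he2.symm.trans he1)
      · have hcc := hfWinj (he1.symm.trans he2)
        subst hcc
        exact hab (hc1.trans hc2.symm)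
    have hcard1 : ∀ b1 : Fin q, (D0 (Sum.inl b1)).card = 1 := by
      intro b1; simp [hD0]
    have hcardB : (D0 (Sum.inr (Sum.inl ()))).card = g + 1 := by
      show ((Finset.univ : Finset (Fin (g+1))).image
          (fun c => fZ (Sum.inr (Sum.inl c)))).card = g + 1
      rw [Finset.card_image_of_injective _ (fun a b h => by
        have := hfZinj h
        simpa using this)]
      simp
    have hcardP : ∀ c : Fin p, (D0 (Sum.inr (Sum.inr c))).card = 2 := by
      intro c
      exact Finset.card_pair (hZW _ _)
    have hwt1 : ∀ b1 : Fin q, wt (D0 (Sum.inl b1)) v = 0 := by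
      intro b1
      apply wt_eq_zero
      intro j hj
      rw [Finset.mem_singleton.1 hj]
      exact hvZ _
    have hwtB : wt (D0 (Sum.inr (Sum.inl ()))) v = 0 := by
      apply wt_eq_zero
      intro j hj
      obtain ⟨c, _, rfl⟩ := Finset.mem_image.1 hj
      exact hvZ _
    have hwtP : ∀ c : Fin p, wt (D0 (Sum.inr (Sum.inr c))) v = 1 := by
      intro c
      have : (D0 (Sum.inr (Sum.inr c))).filter (fun j => v j = 1) = {fW c} := by
        ext j
        simp only [Finset.mem_filter, Finset.mem_singleton, hD0, Finset.mem_insert]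
        constructor
        · rintro ⟨rfl | rfl, hv⟩
          · rw [hvZ _] at hv; exact absurd hv (by decide)
          · rfl
        · rintro rfl
          exact ⟨Or.inr rfl, hvW c⟩
      unfold wt
      rw [this, Finset.card_singleton]
    have key : ∀ A : Finset (Fin q ⊕ Unit ⊕ Fin p),
        wt S (v + indic (A.biUnion D0)) ≠ t := by
      intro A
      have hdisA : ∀ a ∈ A, ∀ b ∈ A, a ≠ b → Disjoint (D0 a) (D0 b) :=
        fun a _ b _ h => hD0disj a b h
      have hUS : A.biUnion D0 ⊆ S := Finset.biUnion_subset.2 (fun a _ => hD0S a)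
      have hconv : ∀ f : (Fin q ⊕ Unit ⊕ Fin p) → ℕ, ∑ a ∈ A, f a =
          (∑ b : Fin q, if Sum.inl b ∈ A then f (Sum.inl b) else 0) +
          ((if Sum.inr (Sum.inl ()) ∈ A then f (Sum.inr (Sum.inl ())) else 0) +
           (∑ c : Fin p, if Sum.inr (Sum.inr c) ∈ A then f (Sum.inr (Sum.inr c)) else 0)) := by
        intro f
        have h0 := Finset.sum_ite_mem Finset.univ A f
        rw [Finset.univ_inter] at h0
        rw [← h0, Fintype.sum_sum_type, Fintype.sum_sum_type]
        simp only [Fintype.sum_unique]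
      have c1 : (∑ b : Fin q, if Sum.inl b ∈ A then (D0 (Sum.inl b)).card else 0)
          = ∑ b : Fin q, (if Sum.inl b ∈ A then (1:ℕ) else 0) := by
        apply Finset.sum_congr rfl
        intro b _
        rw [hcard1]
      have c2 : (if Sum.inr (Sum.inl ()) ∈ A then (D0 (Sum.inr (Sum.inl ()))).card else 0)
          = (if Sum.inr (Sum.inl ()) ∈ A then g+1 else 0) := by
        rw [hcardB]
      have c3 : (∑ c : Fin p, if Sum.inr (Sum.inr c) ∈ A then (D0 (Sum.inr (Sum.inr c))).card else 0)
          = 2 * ∑ c : Fin p, (if Sum.inr (Sum.inr c) ∈ A then (1:ℕ) else 0) := by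
        rw [Finset.mul_sum]
        apply Finset.sum_congr rfl
        intro c _
        rw [hcardP]
        split <;> ring
      have hUcard : (A.biUnion D0).card =
          (∑ b : Fin q, (if Sum.inl b ∈ A then (1:ℕ) else 0)) +
          ((if Sum.inr (Sum.inl ()) ∈ A then g+1 else 0) +
           2 * ∑ c : Fin p, (if Sum.inr (Sum.inr c) ∈ A then (1:ℕ) else 0)) := by
        rw [Finset.card_biUnion hdisA, hconv (fun a => (D0 a).card), c1, c2, c3]
      have w1 : (∑ b : Fin q, if Sum.inl b ∈ A then wt (D0 (Sum.inl b)) v else 0) = 0 := by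
        apply Finset.sum_eq_zero
        intro b _
        rw [hwt1]
        split <;> rfl
      have w2 : (if Sum.inr (Sum.inl ()) ∈ A then wt (D0 (Sum.inr (Sum.inl ()))) v else 0)
          = 0 := by
        rw [hwtB]
        split <;> rfl
      have w3 : (∑ c : Fin p, if Sum.inr (Sum.inr c) ∈ A then wt (D0 (Sum.inr (Sum.inr c))) v else 0)
          = ∑ c : Fin p, (if Sum.inr (Sum.inr c) ∈ A then (1:ℕ) else 0) := by
        apply Finset.sum_congr rfl
        intro c _
        rw [hwtP]
      have hUwt : wt (A.biUnion D0) v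
          = ∑ c : Fin p, (if Sum.inr (Sum.inr c) ∈ A then (1:ℕ) else 0) := by
        rw [wt_biUnion hdisA, hconv (fun a => wt (D0 a) v), w1, w2, w3, zero_add, zero_add]
      have hn1q : (∑ b : Fin q, (if Sum.inl b ∈ A then (1:ℕ) else 0)) ≤ q := by
        calc (∑ b : Fin q, if Sum.inl b ∈ A then (1:ℕ) else 0)
            ≤ ∑ _b : Fin q, 1 := Finset.sum_le_sum (fun b _ => by split <;> omega)
          _ = q := by simp
      have hnB : (if Sum.inr (Sum.inl ()) ∈ A then g+1 else 0) = 0 ∨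
          (if Sum.inr (Sum.inl ()) ∈ A then g+1 else 0) = g + 1 := by
        split
        · right; rfl
        · left; rfl
      have hkey := wt_add_indic hUS v
      rw [hUwt, hUcard] at hkey
      omega
    have hcardκg : Fintype.card (Fin q ⊕ Unit ⊕ Fin p) = s := by
      simp only [Fintype.card_sum, Fintype.card_fin, Fintype.card_unit]
      omega
    set e : Fin s ≃ (Fin q ⊕ Unit ⊕ Fin p) :=
      (Fintype.equivOfCardEq (by rw [hcardκg, Fintype.card_fin])) with he
    refine ⟨fun a => D0 (e a), fun a => hD0ne _, fun a => hD0S _,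
      fun a b hab => hD0disj _ _ (fun h => hab (e.injective h)), ?_⟩
    intro A
    have hre : A.biUnion (fun a => D0 (e a)) = (A.image e).biUnion D0 := by
      ext j
      simp only [Finset.mem_biUnion, Finset.mem_image]
      constructor
      · rintro ⟨a, ha, hj⟩
        exact ⟨e a, ⟨a, ha, rfl⟩, hj⟩
      · rintro ⟨b, ⟨a, ha, rfl⟩, hj⟩
        exact ⟨a, ha, hj⟩
    rw [hre]
    exact key _

lemma kill_ne (S : Finset (Fin r)) (v : Fin r → ZMod 2) (t s : ℕ)
    (hw : wt S v ≠ t) (h1 : s ≤ t) (h2 : s + t ≤ S.card) :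
    ∃ D : Fin s → Finset (Fin r), (∀ a, (D a).Nonempty) ∧ (∀ a, D a ⊆ S) ∧
      (∀ a b : Fin s, a ≠ b → Disjoint (D a) (D b)) ∧
      ∀ A : Finset (Fin s), wt S (v + indic (A.biUnion D)) ≠ t := by
  rcases lt_or_gt_of_ne hw with hlt | hgt
  · exact kill S v t s hlt h1 h2
  · have hwle := wt_le S v
    obtain ⟨D, hne, hsub, hdisj, havoid⟩ :=
      kill S (v + indic S) (S.card - t) s
        (by
          have : wt S (v + indic S) = S.card - wt S v := by
            rw [wt_congr (z := fun j => v j + 1)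
              (fun j hj => by simp [indic_mem hj]), wt_flip]
          omega)
        (by omega) (by omega)
    refine ⟨D, hne, hsub, hdisj, ?_⟩
    intro A
    have h := havoid A
    have hswap : wt S (v + indic (A.biUnion D)) =
        S.card - wt S ((v + indic S) + indic (A.biUnion D)) := by
      rw [wt_congr (y := v + indic (A.biUnion D))
        (z := fun j => ((v + indic S) + indic (A.biUnion D)) j + 1) ?_, wt_flip]
      intro j hj
      simp only [Pi.add_apply, indic_mem hj]
      generalize v j = a
      generalize indic (A.biUnion D) j = b
      revert a b
      decide
    have hle2 := wt_le S ((v + indic S) + indic (A.biUnion D))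
    omega

lemma exists_blocks (k : ℕ) (rr : Fin k → ℕ) (h : ∑ i, rr i ≤ r) :
    ∃ S : Fin k → Finset (Fin r), (∀ i, (S i).card = rr i) ∧
      ∀ i j : Fin k, i ≠ j → Disjoint (S i) (S j) := by
  classical
  set off : Fin k → ℕ := fun i => ∑ l ∈ Finset.Iio i, rr l with hoff
  have hIic : ∀ i : Fin k, off i + rr i = ∑ l ∈ Finset.Iic i, rr l := by
    intro i
    rw [← Finset.Iio_insert, Finset.sum_insert (by simp)]
    ring
  have hub : ∀ i, off i + rr i ≤ r := by
    intro i
    rw [hIic]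
    calc ∑ l ∈ Finset.Iic i, rr l ≤ ∑ l, rr l :=
      Finset.sum_le_sum_of_subset (Finset.subset_univ _)
    _ ≤ r := h
  have hmono : ∀ i j : Fin k, i < j → off i + rr i ≤ off j := by
    intro i j hij
    rw [hIic]
    exact Finset.sum_le_sum_of_subset (fun l hl => by
      simp only [Finset.mem_Iic] at hl
      simp only [Finset.mem_Iio]
      exact lt_of_le_of_lt hl hij)
  refine ⟨fun i => Finset.univ.filter (fun x : Fin r => off i ≤ x.val ∧ x.val < off i + rr i),
    ?_, ?_⟩
  · intro i
    have hubi := hub i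
    rw [Finset.card_bij' (t := Finset.Ico (off i) (off i + rr i))
      (i := fun x _ => x.val)
      (j := fun n hn => (⟨n, by simp only [Finset.mem_Ico] at hn; omega⟩ : Fin r))
      ?_ ?_ ?_ ?_]
    · rw [Nat.card_Ico]
      omega
    · intro x hx
      simp only [Finset.mem_filter] at hx
      simp only [Finset.mem_Ico]
      omega
    · intro n hn
      simp only [Finset.mem_Ico] at hn
      simp only [Finset.mem_filter, Finset.mem_univ, true_and]
      omega
    · intro x hx
      exact Fin.ext rfl
    · intro n hn
      rfl
  · intro i j hij
    rw [Finset.disjoint_left]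
    intro x hxi hxj
    simp only [Finset.mem_filter, Finset.mem_univ, true_and] at hxi hxj
    rcases lt_or_gt_of_ne hij with hlt | hlt
    · have := hmono i j hlt
      omega
    · have := hmono j i hlt
      omega

lemma B_card {k : ℕ} (S : Fin k → Finset (Fin r)) (dd : Fin k → ℕ)
    (hdisj : ∀ i j : Fin k, i ≠ j → Disjoint (S i) (S j)) :
    (Finset.univ.filter (fun b : Fin r → ZMod 2 =>
      (∀ i, wt (S i) b = dd i) ∧ (∀ j, (∀ i, j ∉ S i) → b j = 0))).card
      = ∏ i, ((S i).card).choose (dd i) := by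
  classical
  have hstep : ∀ F : Fin k → Finset (Fin r), (∀ i, F i ⊆ S i) → ∀ i,
      (S i).filter (fun j => (if ∃ i', j ∈ F i' then (1:ZMod 2) else 0) = 1) = F i := by
    intro F hF i
    ext j
    simp only [Finset.mem_filter]
    constructor
    · rintro ⟨hjS, hj1⟩
      by_cases hex : ∃ i', j ∈ F i'
      · obtain ⟨i', hji'⟩ := hex
        have : i' = i := by
          by_contra hne
          exact (Finset.disjoint_left.1 (hdisj i' i hne)) (hF i' hji') hjS
        exact this ▸ hji'
      · rw [if_neg hex] at hj1
        exact absurd hj1 (by decide)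
    · intro hjF
      exact ⟨hF i hjF, by rw [if_pos ⟨i, hjF⟩]⟩
  rw [show ∏ i, ((S i).card).choose (dd i)
      = (Fintype.piFinset fun i => (S i).powersetCard (dd i)).card by
    rw [Fintype.card_piFinset]
    exact (Finset.prod_congr rfl (fun i _ => by rw [Finset.card_powersetCard])).symm]
  apply Finset.card_bij'
    (i := fun b _ => fun i => (S i).filter (fun j => b j = 1))
    (j := fun F _ => fun j => if ∃ i, j ∈ F i then (1:ZMod 2) else 0)
  · intro b hb
    simp only [Finset.mem_filter, Finset.mem_univ, true_and] at hb
    rw [Fintype.mem_piFinset]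
    intro i
    rw [Finset.mem_powersetCard]
    exact ⟨Finset.filter_subset _ _, hb.1 i⟩
  · intro F hF
    rw [Fintype.mem_piFinset] at hF
    have hFsub : ∀ i, F i ⊆ S i := fun i => (Finset.mem_powersetCard.1 (hF i)).1
    simp only [Finset.mem_filter, Finset.mem_univ, true_and]
    constructor
    · intro i
      unfold wt
      rw [hstep F hFsub i]
      exact (Finset.mem_powersetCard.1 (hF i)).2
    · intro j hj
      rw [if_neg]
      rintro ⟨i, hji⟩
      exact hj i (hFsub i hji)
  · intro b hb
    simp only [Finset.mem_filter, Finset.mem_univ, true_and] at hb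
    funext j
    by_cases hex : ∃ i, j ∈ (S i).filter (fun j' => b j' = 1)
    · rw [if_pos hex]
      obtain ⟨i, hji⟩ := hex
      exact ((Finset.mem_filter.1 hji).2).symm
    · rw [if_neg hex]
      by_cases hex2 : ∃ i, j ∈ S i
      · obtain ⟨i, hji⟩ := hex2
        have : ¬ (b j = 1) := fun hc => hex ⟨i, Finset.mem_filter.2 ⟨hji, hc⟩⟩
        exact ((z2ne _).1 this).symm
      · push_neg at hex2
        exact (hb.2 j hex2).symm
  · intro F hF
    rw [Fintype.mem_piFinset] at hF
    have hFsub : ∀ i, F i ⊆ S i := fun i => (Finset.mem_powersetCard.1 (hF i)).1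
    funext i
    exact hstep F hFsub i

end KKX

open KKX Finset Submodule in
theorem beta_lower2 (r d k : ℕ) (hd : 1 ≤ d) (hr : d ≤ r) (hk : 1 ≤ k)
    (rr dd : Fin k → ℕ) (hrd : ∀ i, dd i ≤ rr i)
    (hrsum : ∑ i, rr i ≤ r) (hdsum : ∑ i, dd i ≤ d)
    (hri : ∀ i, rr i ≤ d + dd i) :
    ∏ i, (rr i).choose (dd i) ≤ beta r d := by
  classical
  obtain ⟨S, hScard, hSdisj⟩ := exists_blocks (r := r) k rr hrsum
  set B : Finset (Fin r → ZMod 2) := Finset.univ.filter (fun b =>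
      (∀ i, wt (S i) b = dd i) ∧ (∀ j, (∀ i, j ∉ S i) → b j = 0)) with hB
  have hBmem : ∀ b : Fin r → ZMod 2, b ∈ B ↔
      ((∀ i, wt (S i) b = dd i) ∧ (∀ j, (∀ i, j ∉ S i) → b j = 0)) := by
    intro b
    rw [hB, Finset.mem_filter]
    simp only [Finset.mem_univ, true_and]
  have hBcard : B.card = ∏ i, (rr i).choose (dd i) := by
    rw [hB, B_card S dd hSdisj]
    exact Finset.prod_congr rfl (fun i _ => by rw [hScard i])
  have hnb : KakeyaNonBlocking r d ↑B := by
    intro v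
    by_cases hkill : ∃ i₀, wt (S i₀) v ≠ dd i₀
    · -- kill case
      obtain ⟨i₀, hne0⟩ := hkill
      have hrri : rr i₀ ≤ r := by
        rw [← hScard i₀]
        calc (S i₀).card ≤ Fintype.card (Fin r) := Finset.card_le_univ _
        _ = r := Fintype.card_fin r
      have hddd : dd i₀ ≤ d :=
        le_trans (Finset.single_le_sum (fun i _ => Nat.zero_le (dd i))
          (Finset.mem_univ i₀)) hdsum
      obtain ⟨D, hDne, hDsub, hDdisj, hDavoid⟩ :=
        kill_ne (S i₀) v (dd i₀) (rr i₀ - d) hne0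
          (by have := hri i₀; omega)
          (by rw [hScard i₀]; have := hrd i₀; omega)
      have hcompl : (Finset.univ \ S i₀).card = r - rr i₀ := by
        rw [Finset.card_sdiff_of_subset (Finset.subset_univ _), Finset.card_univ,
          Fintype.card_fin, hScard i₀]
      obtain ⟨T, hTsub, hTcard⟩ := Finset.exists_subset_card_eq
        (show r - d - (rr i₀ - d) ≤ (Finset.univ \ S i₀).card by rw [hcompl]; omega)
      set Df : (Fin (rr i₀ - d) ⊕ {x // x ∈ T}) → Finset (Fin r) :=
        Sum.elim D (fun x => {x.val}) with hDf
      have hTnotS : ∀ x : {x // x ∈ T}, x.val ∉ S i₀ := by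
        intro x
        have := hTsub x.2
        exact (Finset.mem_sdiff.1 this).2
      have hfne : ∀ a, (Df a).Nonempty := by
        rintro (a | x)
        · exact hDne a
        · exact ⟨x.val, Finset.mem_singleton_self _⟩
      have hfdisj : ∀ a b, a ≠ b → Disjoint (Df a) (Df b) := by
        rintro (a | x) (b | y) hab
        · exact hDdisj a b (fun h => hab (by rw [h]))
        · rw [Finset.disjoint_left]
          intro j hja hjb
          rw [Finset.mem_singleton.1 hjb] at hja
          exact hTnotS y (hDsub a hja)
        · rw [Finset.disjoint_right]
          intro j hjb hja
          rw [Finset.mem_singleton.1 hja] at hjb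
          exact hTnotS x (hDsub b hjb)
        · rw [Finset.disjoint_left]
          intro j hja hjb
          rw [Finset.mem_singleton.1 hja] at hjb
          exact hab (by rw [Subtype.ext (Finset.mem_singleton.1 hjb).symm])
      obtain ⟨hrank, hspan⟩ := span_family Df hfne hfdisj
      refine ⟨span (ZMod 2) (Set.range fun a => indic (Df a)), ?_, ?_⟩
      · rw [hrank, Fintype.card_sum, Fintype.card_fin, Fintype.card_coe, hTcard]
        omega
      · intro x hx _
        obtain ⟨A, rfl⟩ := hspan x hx
        intro hmemB
        have hpred := (hBmem _).1 hmemB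
        have hwt0 := hpred.1 i₀
        set AL : Finset (Fin (rr i₀ - d)) :=
          Finset.univ.filter (fun a => Sum.inl a ∈ A) with hAL
        have hrestrict : wt (S i₀) (v + indic (A.biUnion Df))
            = wt (S i₀) (v + indic (AL.biUnion D)) := by
          apply wt_congr
          intro j hj
          have hiff : j ∈ A.biUnion Df ↔ j ∈ AL.biUnion D := by
            simp only [Finset.mem_biUnion, hAL, Finset.mem_filter, Finset.mem_univ, true_and]
            constructor
            · rintro ⟨a | x, ha, hja⟩
              · exact ⟨a, ha, hja⟩
              · rw [hDf] at hja
                simp only [Sum.elim_inr, Finset.mem_singleton] at hja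
                rw [hja] at hj
                exact absurd hj (hTnotS x)
            · rintro ⟨a, ha, hja⟩
              exact ⟨Sum.inl a, ha, hja⟩
          simp only [Pi.add_apply]
          congr 1
          simp only [indic]
          rw [if_congr hiff rfl rfl]
        rw [hrestrict] at hwt0
        exact hDavoid AL hwt0
    · push_neg at hkill
      by_cases hout : ∃ j₀, (∀ i, j₀ ∉ S i) ∧ v j₀ = 1
      · -- outside-one case
        obtain ⟨j₀, hj₀S, hj₀v⟩ := hout
        obtain ⟨T, hTsub, hTcard⟩ := Finset.exists_subset_card_eq
          (show r - d ≤ (Finset.univ.erase j₀).card by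
            rw [Finset.card_erase_of_mem (Finset.mem_univ _), Finset.card_univ,
              Fintype.card_fin]
            omega)
        set Df : {x // x ∈ T} → Finset (Fin r) := fun x => {x.val} with hDf
        have hfne : ∀ a, (Df a).Nonempty := fun a => ⟨a.val, Finset.mem_singleton_self _⟩
        have hfdisj : ∀ a b, a ≠ b → Disjoint (Df a) (Df b) := by
          intro a b hab
          rw [Finset.disjoint_left]
          intro j hja hjb
          rw [Finset.mem_singleton.1 hja] at hjb
          exact hab (Subtype.ext (Finset.mem_singleton.1 hjb))
        obtain ⟨hrank, hspan⟩ := span_family Df hfne hfdisj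
        refine ⟨span (ZMod 2) (Set.range fun a => indic (Df a)), ?_, ?_⟩
        · rw [hrank, Fintype.card_coe, hTcard]
        · intro x hx _
          obtain ⟨A, rfl⟩ := hspan x hx
          intro hmemB
          have hpred := (hBmem _).1 hmemB
          have h0 := hpred.2 j₀ hj₀S
          have hj₀U : j₀ ∉ A.biUnion Df := by
            intro hc
            obtain ⟨a, _, hja⟩ := Finset.mem_biUnion.1 hc
            exact (Finset.mem_erase.1 (hTsub a.2)).1 (Finset.mem_singleton.1 hja).symm
          rw [Pi.add_apply, indic_notMem hj₀U, add_zero, hj₀v] at h0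
          exact one_ne_zero h0
      · -- v in B case
        push_neg at hout
        set Wv : Finset (Fin r) := Finset.univ.filter (fun j => v j = 1) with hWv
        have hWveq : Wv = Finset.univ.biUnion
            (fun i => (S i).filter (fun j => v j = 1)) := by
          ext j
          simp only [hWv, Finset.mem_filter, Finset.mem_univ, true_and, Finset.mem_biUnion]
          constructor
          · intro hv1
            by_cases hex : ∃ i, j ∈ S i
            · obtain ⟨i, hi⟩ := hex
              exact ⟨i, hi, hv1⟩
            · push_neg at hex
              exact absurd hv1 (hout j hex)
          · rintro ⟨i, hi, hv1⟩
            exact hv1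

        have hWvcard : Wv.card = ∑ i, dd i := by
          rw [hWveq, Finset.card_biUnion (fun i _ j _ hij =>
            Finset.disjoint_filter_filter (hSdisj i j hij))]
          exact Finset.sum_congr rfl (fun i _ => hkill i)
        obtain ⟨T, hTsub, hTcard⟩ := Finset.exists_subset_card_eq
          (show r - d ≤ (Finset.univ \ Wv).card by
            rw [Finset.card_sdiff_of_subset (Finset.subset_univ _), Finset.card_univ,
              Fintype.card_fin, hWvcard]
            omega)
        have hTv0 : ∀ j ∈ T, v j = 0 := by
          intro j hj
          have := (Finset.mem_sdiff.1 (hTsub hj)).2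
          rw [hWv] at this
          simp only [Finset.mem_filter, Finset.mem_univ, true_and] at this
          exact (z2ne _).1 this
        set Df : {x // x ∈ T} → Finset (Fin r) := fun x => {x.val} with hDf
        have hfne : ∀ a, (Df a).Nonempty := fun a => ⟨a.val, Finset.mem_singleton_self _⟩
        have hfdisj : ∀ a b, a ≠ b → Disjoint (Df a) (Df b) := by
          intro a b hab
          rw [Finset.disjoint_left]
          intro j hja hjb
          rw [Finset.mem_singleton.1 hja] at hjb
          exact hab (Subtype.ext (Finset.mem_singleton.1 hjb))
        obtain ⟨hrank, hspan⟩ := span_family Df hfne hfdisj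
        refine ⟨span (ZMod 2) (Set.range fun a => indic (Df a)), ?_, ?_⟩
        · rw [hrank, Fintype.card_coe, hTcard]
        · intro x hx hx0
          obtain ⟨A, rfl⟩ := hspan x hx
          have hUT : ∀ j ∈ A.biUnion Df, j ∈ T := by
            intro j hj
            obtain ⟨a, _, hja⟩ := Finset.mem_biUnion.1 hj
            rw [Finset.mem_singleton.1 hja]
            exact a.2
          obtain ⟨j₁, hj₁⟩ : (A.biUnion Df).Nonempty := by
            rcases Finset.eq_empty_or_nonempty (A.biUnion Df) with he | hne
            · exfalso
              apply hx0
              rw [he]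
              funext j
              simp [indic]
            · exact hne
          intro hmemB
          have hpred := (hBmem _).1 hmemB
          by_cases hj₁S : ∃ i, j₁ ∈ S i
          · obtain ⟨i₁, hi₁⟩ := hj₁S
            have hwt1 := hpred.1 i₁
            set U' : Finset (Fin r) := (A.biUnion Df) ∩ S i₁ with hU'
            have hcongr : wt (S i₁) (v + indic (A.biUnion Df)) = wt (S i₁) (v + indic U') := by
              apply wt_congr
              intro j hj
              simp only [Pi.add_apply]
              congr 1
              simp only [indic]
              rw [if_congr (show j ∈ A.biUnion Df ↔ j ∈ U' from
                Iff.intro (fun h => Finset.mem_inter.2 ⟨h, hj⟩)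
                  (fun h => (Finset.mem_inter.1 h).1)) rfl rfl]
            have hadd := wt_add_indic (S := S i₁) (U := U') (Finset.inter_subset_right) v
            have hU'wt : wt U' v = 0 := by
              apply wt_eq_zero
              intro j hj
              exact hTv0 j (hUT j (Finset.mem_inter.1 hj).1)
            have hU'nonempty : U'.Nonempty := ⟨j₁, Finset.mem_inter.2 ⟨hj₁, hi₁⟩⟩
            have hU'ne : 0 < U'.card := Finset.card_pos.2 hU'nonempty
            have hwtv := hkill i₁
            rw [hcongr] at hwt1
            omega
          · push_neg at hj₁S
            have h0 := hpred.2 j₁ hj₁S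
            rw [Pi.add_apply, indic_mem hj₁, hTv0 j₁ (hUT j₁ hj₁)] at h0
            rw [zero_add] at h0
            exact one_ne_zero h0
  rw [← hBcard]
  apply le_csSup
  · refine ⟨Fintype.card (Fin r → ZMod 2), ?_⟩
    rintro n ⟨C, hC, _⟩
    exact hC ▸ Finset.card_le_univ C
  · exact ⟨B, rfl, hnb⟩
end
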